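/- arXiv:2309.10113 — 9 statements merged into one kernel-verified Lean document; each statement's English description precedes it below -/
import Mathlib

section
/- No two adjacent vertices in a 5-connected planar graph can have four or more common neighbors. -/
/-- `H` is a minor of `G`: there are nonempty, connected, pairwise disjoint
branch sets in `G`, one for each vertex of `H`, with an edge of `G` between the
branch sets of any two adjacent vertices of `H`. -/
def HasMinor {V W : Type*} (G : SimpleGraph V) (H : SimpleGraph W) : Prop :=
  ∃ f : W → Set V, (∀ w, (f w).Nonempty) ∧ (∀ w, (G.induce (f w)).Connected) ∧
    (∀ w₁ w₂, w₁ ≠ w₂ → Disjoint (f w₁) (f w₂)) ∧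
    (∀ w₁ w₂, H.Adj w₁ w₂ → ∃ a ∈ f w₁, ∃ b ∈ f w₂, G.Adj a b)

/-- A graph is planar iff it has no `K₅` minor and no `K_{3,3}` minor. -/
def IsPlanar {V : Type*} (G : SimpleGraph V) : Prop :=
  ¬ HasMinor G (⊤ : SimpleGraph (Fin 5)) ∧
    ¬ HasMinor G (completeBipartiteGraph (Fin 3) (Fin 3))

/-- `G` is 5-connected: at least 6 vertices, and removing any set of at most 4
vertices leaves it connected. -/
def FiveConnected {V : Type*} [Fintype V] [DecidableEq V] (G : SimpleGraph V) : Prop :=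
  6 ≤ Fintype.card V ∧
    ∀ s : Finset V, s.card ≤ 4 → (G.induce ((↑s : Set V)ᶜ)).Connected

/-! Let `w₀, …, w₃` be common neighbours of `u` and `v` and `s = {u, v, w₀, …, w₃}`.
If `V = s`, deleting any four vertices leaves the remaining two adjacent, so `G = K₆ ⊇ K₅`.
Otherwise take a component `K` of `G - s`. Its neighbours lie in `s`, so if `K` missed two of
the `wᵢ`, deleting `u`, `v` and the other two `wᵢ` would cut `K` off from them. Hence `K` sees
three of the `wᵢ`, and `{u, v, K}` against these three is a `K₃,₃` minor. -/

open Function SimpleGraph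

namespace SimpleGraph

variable {V : Type*} {G : SimpleGraph V}

variable (G) in
lemma connected_induce_singleton (a : V) : (G.induce {a}).Connected := by
  rw [induce_singleton_eq_top]
  exact connected_top

lemma hasMinor_of_embedding {W : Type*} {H : SimpleGraph W} (f : H ↪g G) : HasMinor G H :=
  ⟨fun w => {f w}, fun _ => Set.singleton_nonempty _, fun _ => G.connected_induce_singleton _,
    fun _ _ hne => Set.disjoint_singleton.mpr (f.injective.ne hne),
    fun _ _ hadj => ⟨_, rfl, _, rfl, f.map_adj_iff.mpr hadj⟩⟩

lemma hasMinor_completeBipartiteGraph_three {u v : V} {w : Fin 3 → V} {K : Set V} (huv : u ≠ v)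
    (hw : Injective w) (hu : ∀ i, G.Adj u (w i)) (hv : ∀ i, G.Adj v (w i))
    (hK : (G.induce K).Connected) (huK : u ∉ K) (hvK : v ∉ K) (hwK : ∀ i, w i ∉ K)
    (hKw : ∀ i, ∃ k ∈ K, G.Adj k (w i)) :
    HasMinor G (completeBipartiteGraph (Fin 3) (Fin 3)) := by
  have hwu i : w i ≠ u := (hu i).ne'
  have hwv i : w i ≠ v := (hv i).ne'
  have hcross : ∀ i j, ∃ a ∈ ![{u}, {v}, K] i, ∃ b ∈ ({w j} : Set V), G.Adj a b := by
    intro i j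
    fin_cases i
    exacts [⟨u, rfl, w j, rfl, hu j⟩, ⟨v, rfl, w j, rfl, hv j⟩,
      let ⟨k, hk, hkw⟩ := hKw j; ⟨k, hk, w j, rfl, hkw⟩]
  have hdisj : ∀ i j, Disjoint (![{u}, {v}, K] i) {w j} := by
    intro i j
    fin_cases i
    exacts [Set.disjoint_singleton.mpr (hwu j).symm, Set.disjoint_singleton.mpr (hwv j).symm,
      Set.disjoint_singleton_right.mpr (hwK j)]
  refine ⟨Sum.elim ![{u}, {v}, K] (fun j => {w j}), ?_, ?_, ?_, ?_⟩
  · rintro (i | j)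
    · fin_cases i
      exacts [Set.singleton_nonempty u, Set.singleton_nonempty v,
        Set.nonempty_coe_sort.mp hK.nonempty]
    · exact Set.singleton_nonempty _
  · rintro (i | j)
    · fin_cases i
      exacts [G.connected_induce_singleton u, G.connected_induce_singleton v, hK]
    · exact G.connected_induce_singleton _
  · rintro (i | i) (j | j) hij
    · fin_cases i <;> fin_cases j <;>
        simp_all [Set.disjoint_singleton_left, Set.disjoint_singleton_right, huv.symm]
    · exact hdisj i j
    · exact (hdisj j i).symm
    · exact Set.disjoint_singleton.mpr (hw.ne fun h => hij (congrArg _ h))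
  · rintro (i | i) (j | j) hadj
    · simp at hadj
    · exact hcross i j
    · obtain ⟨a, ha, b, hb, hab⟩ := hcross j i
      exact ⟨b, hb, a, ha, hab.symm⟩
    · simp at hadj

variable (G) in
def componentWithin (t : Set V) (x : V) : Set V :=
  {y | ∃ p : G.Walk x y, ∀ z ∈ p.support, z ∈ t}

section componentWithin

variable {t : Set V} {x y z : V}

lemma mem_componentWithin_self (hx : x ∈ t) : x ∈ G.componentWithin t x :=
  ⟨Walk.nil, by simpa using hx⟩

lemma componentWithin_subset : G.componentWithin t x ⊆ t :=
  fun _ ⟨p, hp⟩ => hp _ p.end_mem_support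

lemma mem_componentWithin_of_adj (hy : y ∈ G.componentWithin t x) (hyz : G.Adj y z)
    (hz : z ∈ t) : z ∈ G.componentWithin t x := by
  obtain ⟨p, hp⟩ := hy
  refine ⟨p.concat hyz, fun a ha => ?_⟩
  rw [Walk.support_concat, List.mem_append, List.mem_singleton] at ha
  exact ha.elim (hp a) fun h => h ▸ hz

lemma connected_induce_componentWithin (hx : x ∈ t) :
    (G.induce (G.componentWithin t x)).Connected := by
  classical
  refine induce_connected_of_patches x (mem_componentWithin_self hx) fun {y} ⟨p, hp⟩ =>
    ⟨{z | z ∈ p.support}, fun z hz => ?_, p.start_mem_support, p.end_mem_support,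
      p.connected_induce_support.preconnected _ _⟩
  exact ⟨p.takeUntil z hz, fun a ha => hp a (p.support_takeUntil_subset_support hz ha)⟩

end componentWithin

lemma exists_adj_of_connected_induce_compl {S K : Set V} (hS : (G.induce Sᶜ).Connected)
    {x y : V} (hxK : x ∈ K) (hxS : x ∉ S) (hyK : y ∉ K) (hyS : y ∉ S) :
    ∃ a ∈ K, ∃ b, b ∉ K ∧ b ∉ S ∧ G.Adj a b := by
  obtain ⟨p⟩ := hS.preconnected ⟨x, hxS⟩ ⟨y, hyS⟩
  obtain ⟨d, -, hd₁, hd₂⟩ := p.exists_boundary_dart {z | z.1 ∈ K} hxK hyK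
  exact ⟨d.fst, hd₁, d.snd, hd₂, d.snd.2, d.adj⟩

lemma exists_injective_commonNeighbors [Fintype V] {u v : V}
    (h : 4 ≤ (G.neighborSet u ∩ G.neighborSet v).ncard) :
    ∃ w : Fin 4 → V, Injective w ∧ (∀ i, G.Adj u (w i)) ∧ ∀ i, G.Adj v (w i) := by
  classical
  obtain ⟨f⟩ : Nonempty (Fin 4 ↪ ↥(G.neighborSet u ∩ G.neighborSet v)) := by
    apply Function.Embedding.nonempty_of_card_le
    rwa [Fintype.card_fin, ← Nat.card_eq_fintype_card, Nat.card_coe_set_eq]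
  exact ⟨fun i => f i, Subtype.val_injective.comp f.injective, fun i => (f i).2.1,
    fun i => (f i).2.2⟩

end SimpleGraph

namespace FiveConnected

variable {V : Type*} [Fintype V] [DecidableEq V] {G : SimpleGraph V}

lemma mem_or_mem_of_forall_adj (h : FiveConnected G) {T : Finset V} (hT : T.card ≤ 4)
    {K : Set V} {x : V} (hxK : x ∈ K) (hxT : x ∉ T)
    (hN : ∀ a ∈ K, ∀ b, G.Adj a b → b ∈ K ∨ b ∈ T) (y : V) : y ∈ K ∨ y ∈ T := by
  by_contra! hy
  obtain ⟨a, ha, b, hbK, hbT, hab⟩ :=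
    exists_adj_of_connected_induce_compl (h.2 T hT) hxK hxT hy.1 hy.2
  exact (hN a ha b hab).elim hbK hbT

lemma eq_top_of_card_le_six (h : FiveConnected G) (hV : Fintype.card V ≤ 6) : G = ⊤ := by
  ext a b
  rw [top_adj]
  refine ⟨G.ne_of_adj, fun hab => ?_⟩
  by_contra hnadj
  have hT : (Finset.univ \ {a, b}).card ≤ 4 := by
    rw [Finset.card_univ_sdiff, Finset.card_pair hab]
    omega
  have hN : ∀ a' ∈ ({a} : Set V), ∀ c, G.Adj a' c →
      c ∈ ({a} : Set V) ∨ c ∈ Finset.univ \ {a, b} := by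
    rintro _ rfl c hac
    right
    simp only [Finset.mem_sdiff, Finset.mem_univ, Finset.mem_insert, Finset.mem_singleton,
      true_and, not_or]
    exact ⟨hac.ne', fun hcb => hnadj (hcb ▸ hac)⟩
  simpa [hab.symm] using h.mem_or_mem_of_forall_adj hT (Set.mem_singleton a) (by simp) hN b

lemma exists_forall_ne_exists_adj (h : FiveConnected G) {u v : V} {w : Fin 4 → V}
    (hw : Injective w) (hwu : ∀ i, w i ≠ u) (hwv : ∀ i, w i ≠ v) {K : Set V} {x : V}
    (hxK : x ∈ K) (hKs : ∀ k ∈ K, k ∉ {u, v} ∪ Finset.univ.image w)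
    (hN : ∀ a ∈ K, ∀ b, G.Adj a b → b ∈ K ∨ b ∈ {u, v} ∪ Finset.univ.image w) :
    ∃ i, ∀ j ≠ i, ∃ k ∈ K, G.Adj k (w j) := by
  by_contra! hmiss
  obtain ⟨i, -, hi⟩ := hmiss 0
  obtain ⟨j, hji, hj⟩ := hmiss i
  set T : Finset V := {u, v} ∪ (Finset.univ \ {i, j}).image w
  have hT : T.card ≤ 4 := calc
    T.card ≤ ({u, v} : Finset V).card + ((Finset.univ \ {i, j}).image w).card :=
      Finset.card_union_le _ _
    _ ≤ 2 + 2 := by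
      gcongr
      · exact Finset.card_le_two
      · refine Finset.card_image_le.trans ?_
        rw [Finset.card_univ_sdiff, Finset.card_pair hji.symm, Fintype.card_fin]
  have hwT : ∀ k, w k ∈ T ↔ k ≠ i ∧ k ≠ j := by
    intro k
    simp [T, hwu k, hwv k, hw.eq_iff]
  have hxT : x ∉ T := fun hx => hKs x hxK (Finset.union_subset_union le_rfl
    (Finset.image_subset_image (Finset.subset_univ _)) hx)
  refine (h.mem_or_mem_of_forall_adj hT hxK hxT (fun a ha b hab => ?_) (w i)).elim
    (fun hwi => hKs _ hwi (by simp)) fun hwi => ((hwT i).mp hwi).1 rfl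
  obtain hb | hb := hN a ha b hab
  · exact Or.inl hb
  · right
    obtain hbuv | hbw := Finset.mem_union.mp hb
    · exact Finset.mem_union_left _ hbuv
    · obtain ⟨k, -, rfl⟩ := Finset.mem_image.mp hbw
      refine (hwT k).mpr ⟨?_, ?_⟩ <;> rintro rfl
      exacts [hi a ha hab, hj a ha hab]

end FiveConnected

/-- No two adjacent vertices in a 5-connected planar graph have four or more
common neighbors. -/
theorem stmt4 {V : Type*} [Fintype V] [DecidableEq V] (G : SimpleGraph V)
    (h5 : FiveConnected G) (hp : IsPlanar G) (u v : V) (huv : G.Adj u v) :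
    ¬ 4 ≤ (G.neighborSet u ∩ G.neighborSet v).ncard := by
  intro h4
  obtain ⟨w, hw, hu, hv⟩ := G.exists_injective_commonNeighbors h4
  set s : Finset V := {u, v} ∪ Finset.univ.image w
  by_cases hs : ∃ x, x ∉ s
  · obtain ⟨x, hx⟩ := hs
    set K := G.componentWithin (↑s)ᶜ x
    have hKs : ∀ k ∈ K, k ∉ s := fun k hk => componentWithin_subset hk
    have hsK : ∀ y ∈ s, y ∉ K := fun y hy hyK => hKs y hyK hy
    obtain ⟨i, hi⟩ := h5.exists_forall_ne_exists_adj hw (fun i => (hu i).ne')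
      (fun i => (hv i).ne') (mem_componentWithin_self hx) hKs
      fun a ha b hab => (em (b ∈ s)).symm.imp (mem_componentWithin_of_adj ha hab) id
    exact hp.2 (hasMinor_completeBipartiteGraph_three huv.ne
      (hw.comp Fin.succAbove_right_injective) (fun _ => hu _) (fun _ => hv _)
      (connected_induce_componentWithin hx) (hsK u (by simp [s])) (hsK v (by simp [s]))
      (fun _ => hsK _ (by simp [s]))
      fun j => hi _ (Fin.succAbove_ne i j))
  · simp only [not_exists, not_not] at hs
    have hV : Fintype.card V ≤ 6 := calc
      Fintype.card V ≤ s.card := Finset.card_le_card fun y _ => hs y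
      _ ≤ ({u, v} : Finset V).card + (Finset.univ.image w).card := Finset.card_union_le _ _
      _ ≤ 2 + 4 :=
        add_le_add Finset.card_le_two (Finset.card_image_le.trans_eq (Finset.card_fin 4))
    obtain ⟨f⟩ := Function.Embedding.nonempty_of_card_le
      ((Fintype.card_fin 5).trans_le ((Nat.le_succ 5).trans h5.1))
    exact hp.1 (h5.eq_top_of_card_le_six hV ▸ hasMinor_of_embedding (Embedding.completeGraph f))
end

section
/- If G is a 3-regular planar graph, then there exists a vertex v ∈ V(G) such that no vertex w ≠ v satisfies N(w) = N(v); equivalently, it is not the case that every vertex of G shares its exact neighborhood with another vertex. -/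
lemma induce_singleton_connected {V : Type*} (G : SimpleGraph V) (a : V) :
    (G.induce ({a} : Set V)).Connected := by
  rw [SimpleGraph.connected_iff]
  refine ⟨?_, ⟨⟨a, rfl⟩⟩⟩
  intro x y
  have hx : (x : V) = a := x.2
  have hy : (y : V) = a := y.2
  have : x = y := Subtype.ext (hx.trans hy.symm)
  exact this ▸ SimpleGraph.Reachable.refl x

lemma k33_minor {V : Type*} (G : SimpleGraph V) {u v w : V}
    (huv : u ≠ v) (huw : u ≠ w) (hvw : v ≠ w)
    (hv : G.neighborSet v = G.neighborSet u) (hw : G.neighborSet w = G.neighborSet u)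
    (h3 : (G.neighborSet u).ncard = 3) :
    HasMinor G (completeBipartiteGraph (Fin 3) (Fin 3)) := by
  obtain ⟨p, q, r, hpq, hpr, hqr, hN⟩ := Set.ncard_eq_three.mp h3
  have hpu : p ∈ G.neighborSet u := by rw [hN]; simp
  have hqu : q ∈ G.neighborSet u := by rw [hN]; simp
  have hru : r ∈ G.neighborSet u := by rw [hN]; simp
  have hpv : p ∈ G.neighborSet v := by rw [hv]; exact hpu
  have hqv : q ∈ G.neighborSet v := by rw [hv]; exact hqu
  have hrv : r ∈ G.neighborSet v := by rw [hv]; exact hru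
  have hpw : p ∈ G.neighborSet w := by rw [hw]; exact hpu
  have hqw : q ∈ G.neighborSet w := by rw [hw]; exact hqu
  have hrw : r ∈ G.neighborSet w := by rw [hw]; exact hru
  have nself : ∀ s : V, s ∉ G.neighborSet s := fun s hs => G.irrefl hs
  -- distinctness of top vertices from bottom vertices
  have hup : u ≠ p := fun h => nself u (h ▸ hpu)
  have huq : u ≠ q := fun h => nself u (h ▸ hqu)
  have hur : u ≠ r := fun h => nself u (h ▸ hru)
  have hvp : v ≠ p := fun h => nself v (h ▸ hpv)
  have hvq : v ≠ q := fun h => nself v (h ▸ hqv)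
  have hvr : v ≠ r := fun h => nself v (h ▸ hrv)
  have hwp : w ≠ p := fun h => nself w (h ▸ hpw)
  have hwq : w ≠ q := fun h => nself w (h ▸ hqw)
  have hwr : w ≠ r := fun h => nself w (h ▸ hrw)
  refine ⟨fun s => {Sum.elim ![u, v, w] ![p, q, r] s}, ?_, ?_, ?_, ?_⟩
  · intro s; exact ⟨_, rfl⟩
  · intro s; exact induce_singleton_connected G _
  · intro s₁ s₂ hne
    rw [Set.disjoint_singleton]
    rcases s₁ with i | i <;> rcases s₂ with j | j <;> fin_cases i <;> fin_cases j <;>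
      simp_all <;> tauto
  · have adj : ∀ (i j : Fin 3), G.Adj (![u, v, w] i) (![p, q, r] j) := by
      intro i j
      fin_cases i <;> fin_cases j <;>
        simp only [Matrix.cons_val_zero, Matrix.cons_val_one, Matrix.head_cons,
          Matrix.cons_val_two, Matrix.tail_cons] <;>
        first
          | exact hpu | exact hqu | exact hru
          | exact hpv | exact hqv | exact hrv
          | exact hpw | exact hqw | exact hrw
    intro s₁ s₂ hadj
    rcases s₁ with i | i <;> rcases s₂ with j | j <;>
      simp only [completeBipartiteGraph_adj] at hadj
    · simp at hadj
    · exact ⟨_, rfl, _, rfl, adj i j⟩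
    · exact ⟨_, rfl, _, rfl, (adj j i).symm⟩
    · simp at hadj

/-- In a connected 3-regular planar graph there is a vertex whose exact
neighborhood is not shared by any other vertex. -/
theorem stmt6 {V : Type*} [Fintype V] (G : SimpleGraph V)
    (hc : G.Connected) (hp : IsPlanar G)
    (hreg : ∀ v, (G.neighborSet v).ncard = 3) :
    ∃ v : V, ∀ w : V, w ≠ v → G.neighborSet w ≠ G.neighborSet v := by
  by_contra h
  push_neg at h
  obtain ⟨a⟩ := hc.nonempty
  obtain ⟨x, y, z, hxy, hxz, hyz, hNa⟩ := Set.ncard_eq_three.mp (hreg a)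
  have key : ∀ s ∈ G.neighborSet a, ∃ s', s' ∈ G.neighborSet a ∧ s' ≠ s ∧
      G.neighborSet s' = G.neighborSet s := by
    intro s hs
    obtain ⟨s', hne, hNs⟩ := h s
    refine ⟨s', ?_, hne, hNs⟩
    have ha : a ∈ G.neighborSet s := (SimpleGraph.mem_neighborSet ..).mpr
      ((SimpleGraph.mem_neighborSet ..).mp hs).symm
    rw [← hNs] at ha
    exact (SimpleGraph.mem_neighborSet ..).mpr
      ((SimpleGraph.mem_neighborSet ..).mp ha).symm
  have hx : x ∈ G.neighborSet a := by rw [hNa]; simp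
  have hy : y ∈ G.neighborSet a := by rw [hNa]; simp
  have hz : z ∈ G.neighborSet a := by rw [hNa]; simp
  obtain ⟨x', hx'mem, hx'ne, hx'N⟩ := key x hx
  rw [hNa] at hx'mem
  simp only [Set.mem_insert_iff, Set.mem_singleton_iff] at hx'mem
  have hmain : G.neighborSet y = G.neighborSet x ∧ G.neighborSet z = G.neighborSet x := by
    rcases hx'mem with h1 | h1 | h1
    · exact absurd h1 hx'ne
    · -- x' = y : N y = N x; now z's twin
      subst h1
      obtain ⟨z', hz'mem, hz'ne, hz'N⟩ := key z hz
      rw [hNa] at hz'mem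
      simp only [Set.mem_insert_iff, Set.mem_singleton_iff] at hz'mem
      rcases hz'mem with h2 | h2 | h2
      · subst h2; exact ⟨hx'N, hz'N.symm⟩
      · subst h2; exact ⟨hx'N, (hz'N.symm.trans hx'N)⟩
      · exact absurd h2 hz'ne
    · -- x' = z : N z = N x; now y's twin
      subst h1
      obtain ⟨y', hy'mem, hy'ne, hy'N⟩ := key y hy
      rw [hNa] at hy'mem
      simp only [Set.mem_insert_iff, Set.mem_singleton_iff] at hy'mem
      rcases hy'mem with h2 | h2 | h2
      · subst h2; exact ⟨hy'N.symm, hx'N⟩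
      · exact absurd h2 hy'ne
      · subst h2; exact ⟨(hy'N.symm.trans hx'N), hx'N⟩
  exact hp.2 (k33_minor G hxy hxz hyz hmain.1 hmain.2 (hreg x))
end

section
/- If G is a 4-regular planar graph on n ≥ 7 vertices, then there exists a vertex v ∈ V(G) such that no vertex w ≠ v satisfies N(w) = N(v). -/
open Finset Function

local notation "K₃₃" => completeBipartiteGraph (Fin 3) (Fin 3)

theorem Finset.card_eq_two_mul_card_filter {α : Type*} {f : α → α} (hf : Involutive f)
    {s : Finset α} (hs : ∀ a ∈ s, f a ∈ s) (p : α → Prop) [DecidablePred p]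
    (hp : ∀ a ∈ s, p (f a) ↔ ¬ p a) :
    #s = 2 * #{a ∈ s | p a} := by
  rw [← card_filter_add_card_filter_not p, two_mul]
  congr 1
  refine card_nbij' f f (fun a ha => ?_) (fun a ha => ?_) (fun a _ => hf a) (fun a _ => hf a)
  · simp only [coe_filter, Set.mem_ofPred_eq] at ha ⊢
    exact ⟨hs a ha.1, (hp a ha.1).2 ha.2⟩
  · simp only [coe_filter, Set.mem_ofPred_eq] at ha ⊢
    exact ⟨hs a ha.1, fun h => (hp a ha.1).1 h ha.2⟩

namespace SimpleGraph

variable {V : Type*} {G : SimpleGraph V}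

theorem induce_singleton_connected (v : V) : (G.induce {v}).Connected :=
  have : Nonempty ({v} : Set V) := ⟨⟨v, rfl⟩⟩
  ⟨Preconnected.of_subsingleton⟩

theorem Walk.mem_of_adj_closed {s : Set V} (hs : ∀ u ∈ s, ∀ w, G.Adj u w → w ∈ s) {u w : V}
    (p : G.Walk u w) (hu : u ∈ s) : w ∈ s := by
  induction p with
  | nil => exact hu
  | cons h _ ih => exact ih (hs _ hu _ h)

theorem hasMinor_completeBipartiteGraph_of_branchSets {ι κ : Type*} (A : ι → Set V)
    (B : κ → Set V) (hA : ∀ i, (G.induce (A i)).Connected) (hB : ∀ j, (G.induce (B j)).Connected)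
    (hAA : Pairwise (Disjoint on A)) (hBB : Pairwise (Disjoint on B))
    (hAB : ∀ i j, Disjoint (A i) (B j)) (hadj : ∀ i j, ∃ a ∈ A i, ∃ b ∈ B j, G.Adj a b) :
    HasMinor G (completeBipartiteGraph ι κ) := by
  refine ⟨Sum.elim A B, ?_, ?_, ?_, ?_⟩
  · rintro (i | j)
    exacts [Set.nonempty_coe_sort.1 (hA i).nonempty, Set.nonempty_coe_sort.1 (hB j).nonempty]
  · rintro (i | j)
    exacts [hA i, hB j]
  · rintro (i | j) (i' | j') h
    · exact hAA fun e => h (congrArg _ e)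
    · exact hAB i j'
    · exact (hAB i' j).symm
    · exact hBB fun e => h (congrArg _ e)
  · rintro (i | j) (i' | j') h <;> simp only [completeBipartiteGraph_adj, Sum.isLeft_inl,
      Sum.isRight_inr, Sum.isLeft_inr, Sum.isRight_inl] at h <;> simp at h
    · exact hadj i j'
    · obtain ⟨a, ha, b, hb, hab⟩ := hadj i' j
      exact ⟨b, hb, a, ha, hab.symm⟩

theorem hasMinor_K33_of_adj {u₁ u₂ b₁ b₂ b₃ : V} {T : Set V} (hu : u₁ ≠ u₂) (hb₁₂ : b₁ ≠ b₂)
    (hb₁₃ : b₁ ≠ b₃) (hb₂₃ : b₂ ≠ b₃)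
    (hub : ∀ b ∈ ({b₁, b₂, b₃} : Set V), G.Adj u₁ b ∧ G.Adj u₂ b)
    (hT : (G.induce T).Connected) (hTdisj : Disjoint T {u₁, u₂, b₁, b₂, b₃})
    (hTb : ∀ b ∈ ({b₁, b₂, b₃} : Set V), ∃ z ∈ T, G.Adj z b) :
    HasMinor G K₃₃ := by
  simp only [Set.mem_insert_iff, Set.mem_singleton_iff, forall_eq_or_imp, forall_eq] at hub hTb
  have hne : (u₁ ≠ b₁ ∧ u₁ ≠ b₂ ∧ u₁ ≠ b₃) ∧ u₂ ≠ b₁ ∧ u₂ ≠ b₂ ∧ u₂ ≠ b₃ :=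
    ⟨⟨hub.1.1.ne, hub.2.1.1.ne, hub.2.2.1.ne⟩, hub.1.2.ne, hub.2.1.2.ne, hub.2.2.2.ne⟩
  rw [Set.disjoint_right] at hTdisj
  simp only [Set.mem_insert_iff, Set.mem_singleton_iff, forall_eq_or_imp, forall_eq] at hTdisj
  apply hasMinor_completeBipartiteGraph_of_branchSets ![{u₁}, {u₂}, T] ![{b₁}, {b₂}, {b₃}]
  · intro i
    fin_cases i
    exacts [induce_singleton_connected u₁, induce_singleton_connected u₂, hT]
  · intro j
    fin_cases j <;> exact induce_singleton_connected _
  · refine Pairwise.of_lt fun i j hij => ?_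
    fin_cases i <;> fin_cases j <;> simp_all [onFun]
  · refine Pairwise.of_lt fun i j hij => ?_
    fin_cases i <;> fin_cases j <;> simp_all [onFun]
  · intro i j
    fin_cases i <;> fin_cases j <;> simp_all
  · intro i j
    fin_cases i <;> fin_cases j <;> simp_all

theorem hasMinor_K33_of_neighborSet_eq {u v w : V} (huv : u ≠ v) (huw : u ≠ w) (hvw : v ≠ w)
    (hv : G.neighborSet v = G.neighborSet u) (hw : G.neighborSet w = G.neighborSet u)
    (hdeg : 2 < (G.neighborSet u).ncard) :
    HasMinor G K₃₃ := by
  obtain ⟨a, ha, b, hb, c, hc, hab, hac, hbc⟩ :=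
    (Set.two_lt_ncard (Set.finite_of_ncard_pos (by omega))).1 hdeg
  have hadj : ∀ z ∈ G.neighborSet u, G.Adj u z ∧ G.Adj v z ∧ G.Adj w z :=
    fun z hz => ⟨hz, (hv ▸ hz : z ∈ G.neighborSet v), (hw ▸ hz : z ∈ G.neighborSet w)⟩
  have hsub : ({a, b, c} : Set V) ⊆ G.neighborSet u := by
    simp [Set.insert_subset_iff, ha, hb, hc]
  refine hasMinor_K33_of_adj huv hab hac hbc
    (fun z hz => ⟨(hadj z (hsub hz)).1, (hadj z (hsub hz)).2.1⟩) (induce_singleton_connected w) ?_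
    (fun z hz => ⟨w, rfl, (hadj z (hsub hz)).2.2⟩)
  simp only [Set.disjoint_singleton_left, Set.mem_insert_iff, Set.mem_singleton_iff, not_or]
  exact ⟨huw.symm, hvw.symm, (hadj a ha).2.2.ne, (hadj b hb).2.2.ne, (hadj c hc).2.2.ne⟩

theorem card_interedges_eq_sum [DecidableRel G.Adj] (s t : Finset V) :
    #(G.interedges s t) = ∑ u ∈ s, #{w ∈ t | G.Adj u w} := by
  rw [interedges_def, card_filter, sum_product]
  simp only [card_filter]

theorem card_interedges_self_add_card_interedges_compl [Fintype V] [DecidableEq V]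
    [DecidableRel G.Adj] (s : Finset V) :
    #(G.interedges s s) + #(G.interedges s sᶜ) = ∑ u ∈ s, G.degree u := by
  rw [card_interedges_eq_sum, card_interedges_eq_sum, ← sum_add_distrib]
  refine sum_congr rfl fun u _ => ?_
  rw [← card_union_of_disjoint (disjoint_filter_filter disjoint_compl_right), ← filter_union,
    union_compl, ← neighborFinset_eq_filter, card_neighborFinset_eq_degree]

structure IsTwinInvolution (G : SimpleGraph V) (τ : V → V) : Prop where
  apply_ne (v : V) : τ v ≠ v
  neighborSet_apply (v : V) : G.neighborSet (τ v) = G.neighborSet v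
  eq_or_eq_of_neighborSet_eq {v w : V} : G.neighborSet w = G.neighborSet v → w = v ∨ w = τ v

theorem exists_isTwinInvolution (hK : ¬ HasMinor G K₃₃)
    (hdeg : ∀ v, 2 < (G.neighborSet v).ncard)
    (htwin : ∀ v, ∃ w ≠ v, G.neighborSet w = G.neighborSet v) :
    ∃ τ, G.IsTwinInvolution τ := by
  choose τ hne hN using htwin
  refine ⟨τ, ⟨hne, hN, fun {v w} hw => ?_⟩⟩
  by_contra! h
  exact hK (hasMinor_K33_of_neighborSet_eq h.1.symm (hne v).symm h.2 hw (hN v) (hdeg v))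

def closedTwinNbhd (G : SimpleGraph V) [Fintype V] [DecidableEq V] [DecidableRel G.Adj]
    (τ : V → V) (v : V) : Finset V :=
  {v, τ v} ∪ G.neighborFinset v

namespace IsTwinInvolution

variable {τ : V → V}

theorem involutive (hτ : G.IsTwinInvolution τ) : Involutive τ := fun v =>
  ((hτ.eq_or_eq_of_neighborSet_eq (hτ.neighborSet_apply v).symm).resolve_left
    (hτ.apply_ne v).symm).symm

theorem adj_apply_left_iff (hτ : G.IsTwinInvolution τ) {u w : V} : G.Adj (τ u) w ↔ G.Adj u w := by
  rw [← mem_neighborSet, hτ.neighborSet_apply, mem_neighborSet]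

theorem adj_apply_right_iff (hτ : G.IsTwinInvolution τ) {u w : V} : G.Adj u (τ w) ↔ G.Adj u w := by
  rw [adj_comm, hτ.adj_apply_left_iff, adj_comm]

theorem apply_lt_iff [LinearOrder V] (hτ : G.IsTwinInvolution τ) (v : V) : τ v < v ↔ ¬ v < τ v := by
  rw [not_lt, (hτ.apply_ne v).le_iff_lt]

theorem two_dvd_card (hτ : G.IsTwinInvolution τ) (S : Finset V) (hS : ∀ v ∈ S, τ v ∈ S) :
    2 ∣ #S := by
  classical
  let := linearOrderOfSTO (α := V) WellOrderingRel
  exact ⟨_, card_eq_two_mul_card_filter hτ.involutive hS (fun v => v < τ v)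
    fun v _ => by rw [hτ.involutive v]; exact hτ.apply_lt_iff v⟩

theorem apply_mem_pair_iff [DecidableEq V] (hτ : G.IsTwinInvolution τ) {z w : V} :
    τ z ∈ ({w, τ w} : Finset V) ↔ z ∈ ({w, τ w} : Finset V) := by
  simp [hτ.involutive.eq_iff, hτ.involutive w, or_comm]

theorem pair_eq_of_mem_pair [DecidableEq V] (hτ : G.IsTwinInvolution τ) {z w : V}
    (h : z ∈ ({w, τ w} : Finset V)) : ({z, τ z} : Finset V) = {w, τ w} := by
  rcases mem_insert.1 h with rfl | h
  · rfl
  · rw [mem_singleton.1 h, hτ.involutive, pair_comm]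

theorem notMem_pair_of_adj [DecidableEq V] (hτ : G.IsTwinInvolution τ) {u w : V}
    (h : G.Adj u w) : w ∉ ({u, τ u} : Finset V) := by
  simp only [mem_insert, mem_singleton, not_or]
  exact ⟨h.ne.symm, fun e => G.irrefl (hτ.adj_apply_right_iff.1 (e ▸ h))⟩

theorem neighborFinset_apply [Fintype V] [DecidableRel G.Adj] (hτ : G.IsTwinInvolution τ)
    (v : V) : G.neighborFinset (τ v) = G.neighborFinset v := by
  ext
  simp [hτ.adj_apply_left_iff]

theorem eight_dvd_card_interedges [DecidableRel G.Adj] (hτ : G.IsTwinInvolution τ) (S : Finset V)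
    (hS : ∀ v ∈ S, τ v ∈ S) : 8 ∣ #(G.interedges S S) := by
  classical
  let := linearOrderOfSTO (α := V) WellOrderingRel
  set D := G.interedges S S
  set D₁ := {d ∈ D | d.1 < τ d.1}
  set D₂ := {d ∈ D₁ | d.2 < τ d.2}
  have h₁ : #D = 2 * #D₁ := by
    refine card_eq_two_mul_card_filter (hτ.involutive.prodMap (g := id) fun _ => rfl)
      (fun d hd => ?_) _ fun d _ => by simpa [hτ.involutive d.1] using hτ.apply_lt_iff d.1
    simp_all [D, mem_interedges_iff, hτ.adj_apply_left_iff]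
  have h₂ : #D₁ = 2 * #D₂ := by
    refine card_eq_two_mul_card_filter (Involutive.prodMap (f := id) (fun _ => rfl) hτ.involutive)
      (fun d hd => ?_) _ fun d _ => by simpa [hτ.involutive d.2] using hτ.apply_lt_iff d.2
    simp_all [D₁, D, mem_interedges_iff, hτ.adj_apply_right_iff]
  have h₃ : #D₂ = 2 * #{d ∈ D₂ | d.1 < d.2} := by
    refine card_eq_two_mul_card_filter (fun d => Prod.swap_swap d) (fun d hd => ?_) _
      fun d hd => ?_
    · simp_all [D₂, D₁, D, mem_interedges_iff, G.adj_comm]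
    · have hne : d.1 ≠ d.2 :=
        (G.mem_interedges_iff.1 (filter_subset _ _ (filter_subset _ _ hd))).2.2.ne
      simp [not_lt, hne.symm.le_iff_lt]
  exact ⟨#{d ∈ D₂ | d.1 < d.2}, by omega⟩

section Finite

variable [Fintype V] [DecidableEq V] [DecidableRel G.Adj]

theorem neighborFinset_eq_of_mem_pair (hτ : G.IsTwinInvolution τ) {z w : V}
    (h : z ∈ ({w, τ w} : Finset V)) : G.neighborFinset z = G.neighborFinset w := by
  rcases mem_insert.1 h with rfl | h
  · rfl
  · rw [mem_singleton.1 h, hτ.neighborFinset_apply]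

theorem exists_neighborFinset_eq_union (hτ : G.IsTwinInvolution τ) (hreg : G.IsRegularOfDegree 4)
    {u w : V} (h : G.Adj u w) :
    ∃ q, Disjoint ({w, τ w} : Finset V) {q, τ q} ∧
      G.neighborFinset u = {w, τ w} ∪ {q, τ q} := by
  have hw : ({w, τ w} : Finset V) ⊆ G.neighborFinset u := by
    simp [insert_subset_iff, h, hτ.adj_apply_right_iff]
  obtain ⟨q, hq⟩ : (G.neighborFinset u \ {w, τ w}).Nonempty := by
    rw [← card_pos, card_sdiff_of_subset hw, card_pair (hτ.apply_ne w).symm,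
      card_neighborFinset_eq_degree, hreg u]
    norm_num
  have hq' : ({q, τ q} : Finset V) ⊆ G.neighborFinset u \ {w, τ w} := by
    rw [mem_sdiff, mem_neighborFinset] at hq
    simp [insert_subset_iff, hq, hτ.adj_apply_right_iff, hτ.apply_mem_pair_iff]
  have hdisj : Disjoint ({w, τ w} : Finset V) {q, τ q} :=
    disjoint_of_subset_right hq' disjoint_sdiff
  refine ⟨q, hdisj, (eq_of_subset_of_card_le (union_subset hw (hq'.trans sdiff_subset)) ?_).symm⟩
  rw [card_union_of_disjoint hdisj, card_pair (hτ.apply_ne w).symm, card_pair (hτ.apply_ne q).symm,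
    card_neighborFinset_eq_degree, hreg u]

theorem eight_dvd_card_interedges_compl (hτ : G.IsTwinInvolution τ)
    (hreg : G.IsRegularOfDegree 4) (S : Finset V) (hS : ∀ v ∈ S, τ v ∈ S) :
    8 ∣ #(G.interedges S Sᶜ) := by
  have h := G.card_interedges_self_add_card_interedges_compl S
  rw [sum_const_nat fun v _ => hreg v] at h
  obtain ⟨k, hk⟩ := hτ.eight_dvd_card_interedges S hS
  obtain ⟨m, hm⟩ := hτ.two_dvd_card S hS
  omega

variable {v a c x y : V}

theorem mem_pair_of_adj_of_mem (hτ : G.IsTwinInvolution τ)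
    (hNv : G.neighborFinset v = {a, τ a} ∪ {c, τ c})
    (hNa : G.neighborFinset a = {v, τ v} ∪ {x, τ x})
    (hNc : G.neighborFinset c = {v, τ v} ∪ {y, τ y}) {u z : V}
    (hu : u ∉ G.closedTwinNbhd τ v)
    (hz : z ∈ G.closedTwinNbhd τ v) (h : G.Adj u z) :
    z ∈ ({a, τ a} : Finset V) ∧ u ∈ ({x, τ x} : Finset V) ∨
      z ∈ ({c, τ c} : Finset V) ∧ u ∈ ({y, τ y} : Finset V) := by
  rw [closedTwinNbhd, mem_union, not_or] at hu
  have hzu : u ∈ G.neighborFinset z := (mem_neighborFinset _ _ _).2 h.symm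
  rcases mem_union.1 hz with hz | hz
  · exact absurd (hτ.neighborFinset_eq_of_mem_pair hz ▸ hzu) hu.2
  rw [hNv, mem_union] at hz
  rcases hz with hz | hz
  · rw [hτ.neighborFinset_eq_of_mem_pair hz, hNa, mem_union] at hzu
    exact Or.inl ⟨hz, hzu.resolve_left hu.1⟩
  · rw [hτ.neighborFinset_eq_of_mem_pair hz, hNc, mem_union] at hzu
    exact Or.inr ⟨hz, hzu.resolve_left hu.1⟩

theorem neighborFinset_subset_of_mem_pair (hτ : G.IsTwinInvolution τ) (hva : G.Adj v a)
    (hNv : G.neighborFinset v = {a, τ a} ∪ {c, τ c})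
    (hNa : G.neighborFinset a = {v, τ v} ∪ {x, τ x})
    (hNc : G.neighborFinset c = {v, τ v} ∪ {y, τ y}) (hxc : x ∈ ({c, τ c} : Finset V)) {z : V}
    (hz : z ∈ G.closedTwinNbhd τ v) :
    G.neighborFinset z ⊆ G.closedTwinNbhd τ v := by
  unfold closedTwinNbhd at hz ⊢
  rw [hτ.pair_eq_of_mem_pair hxc] at hNa
  have hay : a ∈ ({y, τ y} : Finset V) := by
    have hca : a ∈ G.neighborFinset c := by
      rw [mem_neighborFinset, adj_comm, ← mem_neighborFinset, hNa]
      simp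
    rw [hNc, mem_union] at hca
    exact hca.resolve_left (hτ.notMem_pair_of_adj hva)
  rw [← hτ.pair_eq_of_mem_pair hay] at hNc
  rcases mem_union.1 hz with hz | hz
  · rw [hτ.neighborFinset_eq_of_mem_pair hz]
    exact subset_union_right
  rw [hNv, mem_union] at hz
  rcases hz with hz | hz
  · rw [hτ.neighborFinset_eq_of_mem_pair hz, hNa, hNv]
    exact union_subset_union_right subset_union_right
  · rw [hτ.neighborFinset_eq_of_mem_pair hz, hNc, hNv]
    exact union_subset_union_right subset_union_left

theorem interedges_compl_eq_product (hτ : G.IsTwinInvolution τ)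
    (hNv : G.neighborFinset v = {a, τ a} ∪ {c, τ c})
    (hNa : G.neighborFinset a = {v, τ v} ∪ {x, τ x})
    (hNc : G.neighborFinset c = {v, τ v} ∪ {y, τ y}) {R : Set V} (hxR : x ∈ R)
    (hRF : ∀ u ∈ R, u ∉ G.closedTwinNbhd τ v)
    (hRadj : ∀ u ∈ R, ∀ w, G.Adj u w → w ∉ G.closedTwinNbhd τ v → w ∈ R)
    (hRy : ∀ u ∈ R, u ∉ ({y, τ y} : Finset V)) {S : Finset V} (hS : ∀ u, u ∈ S ↔ u ∈ R ∨ τ u ∈ R) :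
    G.interedges S Sᶜ = ({x, τ x} : Finset V) ×ˢ ({a, τ a} : Finset V) := by
  have haF : ∀ w ∈ ({a, τ a} : Finset V), w ∈ G.closedTwinNbhd τ v :=
    fun w hw => mem_union_right _ (hNv ▸ mem_union_left _ hw)
  ext ⟨u, w⟩
  simp only [mem_interedges_iff, mem_compl, mem_product, hS, not_or]
  constructor
  · rintro ⟨hu, ⟨hwR, -⟩, huw⟩
    wlog huR : u ∈ R generalizing u
    · rw [← hτ.apply_mem_pair_iff]
      exact this (τ u) (Or.inl (hu.resolve_left huR)) (hτ.adj_apply_left_iff.2 huw)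
        (hu.resolve_left huR)
    have hwF : w ∈ G.closedTwinNbhd τ v :=
      by_contra fun hwF => hwR (hRadj u huR w huw hwF)
    rcases hτ.mem_pair_of_adj_of_mem hNv hNa hNc (hRF u huR) hwF huw with h | ⟨-, huy⟩
    · exact ⟨h.2, h.1⟩
    · exact absurd huy (hRy u huR)
  · rintro ⟨hu, hw⟩
    refine ⟨?_, ⟨fun hwR => hRF w hwR (haF w hw), fun hwR => ?_⟩, ?_⟩
    · rcases mem_insert.1 hu with rfl | hu
      · exact Or.inl hxR
      · exact Or.inr (by rw [mem_singleton.1 hu, hτ.involutive]; exact hxR)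
    · exact hRF _ hwR (haF _ (hτ.apply_mem_pair_iff.2 hw))
    · rw [← mem_neighborFinset, hτ.neighborFinset_eq_of_mem_pair hu, mem_neighborFinset,
        adj_comm, ← mem_neighborFinset, hτ.neighborFinset_eq_of_mem_pair hw, hNa]
      simp

theorem exists_mem_pair_of_adj_closed (hτ : G.IsTwinInvolution τ) (hreg : G.IsRegularOfDegree 4)
    (hNv : G.neighborFinset v = {a, τ a} ∪ {c, τ c})
    (hNa : G.neighborFinset a = {v, τ v} ∪ {x, τ x})
    (hNc : G.neighborFinset c = {v, τ v} ∪ {y, τ y}) {R : Set V} (hxR : x ∈ R)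
    (hRF : ∀ u ∈ R, u ∉ G.closedTwinNbhd τ v)
    (hRadj : ∀ u ∈ R, ∀ w, G.Adj u w → w ∉ G.closedTwinNbhd τ v → w ∈ R) :
    ∃ u ∈ R, u ∈ ({y, τ y} : Finset V) := by
  classical
  by_contra! hRy
  set S : Finset V := {u | u ∈ R ∨ τ u ∈ R}
  have hSR : ∀ u, u ∈ S ↔ u ∈ R ∨ τ u ∈ R := by simp [S]
  have h8 := hτ.eight_dvd_card_interedges_compl hreg S fun u hu =>
    (hSR _).2 (by rw [hτ.involutive]; exact ((hSR u).1 hu).symm)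
  rw [hτ.interedges_compl_eq_product hNv hNa hNc hxR hRF hRadj hRy hSR, card_product,
    card_pair (hτ.apply_ne x).symm, card_pair (hτ.apply_ne a).symm] at h8
  norm_num at h8

theorem exists_walk_to_pair_avoiding (hτ : G.IsTwinInvolution τ) (hreg : G.IsRegularOfDegree 4)
    (hNv : G.neighborFinset v = {a, τ a} ∪ {c, τ c})
    (hNa : G.neighborFinset a = {v, τ v} ∪ {x, τ x})
    (hNc : G.neighborFinset c = {v, τ v} ∪ {y, τ y})
    (hx : x ∉ G.closedTwinNbhd τ v) :
    ∃ u ∈ ({y, τ y} : Finset V), ∃ p : G.Walk x u,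
      ∀ z ∈ p.support, z ∉ G.closedTwinNbhd τ v := by
  obtain ⟨u, ⟨p, hp⟩, hu⟩ := hτ.exists_mem_pair_of_adj_closed hreg hNv hNa hNc
    (R := {u | ∃ p : G.Walk x u, ∀ z ∈ p.support, z ∉ G.closedTwinNbhd τ v})
    ⟨.nil, by simpa using hx⟩ (fun u ⟨p, hp⟩ => hp u p.end_mem_support)
    fun u ⟨p, hp⟩ w huw hw => ⟨p.concat huw, by
      simp only [Walk.support_concat, List.mem_append, List.mem_singleton]
      rintro z (hz | rfl)
      exacts [hp z hz, hw]⟩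
  exact ⟨u, hu, p, hp⟩

theorem hasMinor_K33_of_walk (hτ : G.IsTwinInvolution τ) {u : V} (hva : G.Adj v a)
    (hvc : G.Adj v c) (hca : c ∉ ({a, τ a} : Finset V)) (hax : G.Adj a x) (hcu : G.Adj c u)
    (p : G.Walk x u) (hp : ∀ z ∈ p.support, z ∉ G.closedTwinNbhd τ v) :
    HasMinor G K₃₃ := by
  simp only [mem_insert, mem_singleton, not_or] at hca
  refine hasMinor_K33_of_adj (hτ.apply_ne v).symm (hτ.apply_ne a).symm (Ne.symm hca.1)
    (Ne.symm hca.2) ?_ p.connected_induce_support ?_ ?_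
  · simp [hτ.adj_apply_left_iff, hτ.adj_apply_right_iff, hva, hvc]
  · rw [Set.disjoint_left]
    intro z hz
    have := hp z hz
    simp only [closedTwinNbhd, mem_union, mem_insert, mem_singleton, mem_neighborFinset,
      not_or] at this
    simp only [Set.mem_insert_iff, Set.mem_singleton_iff, not_or]
    refine ⟨this.1.1, this.1.2, ?_, ?_, ?_⟩ <;> rintro rfl
    exacts [this.2 hva, this.2 (hτ.adj_apply_right_iff.2 hva), this.2 hvc]
  · simp only [Set.mem_insert_iff, Set.mem_singleton_iff, forall_eq_or_imp, forall_eq]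
    exact ⟨⟨x, p.start_mem_support, hax.symm⟩,
      ⟨x, p.start_mem_support, hτ.adj_apply_right_iff.2 hax.symm⟩, ⟨u, p.end_mem_support, hcu.symm⟩⟩

theorem card_le_six (hτ : G.IsTwinInvolution τ) (hreg : G.IsRegularOfDegree 4) (hc : G.Connected)
    (hK : ¬ HasMinor G K₃₃) : Fintype.card V ≤ 6 := by
  obtain ⟨v⟩ := hc.nonempty
  obtain ⟨a, ha⟩ : (G.neighborFinset v).Nonempty := by
    rw [← card_pos, card_neighborFinset_eq_degree, hreg v]
    norm_num
  rw [mem_neighborFinset] at ha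
  obtain ⟨c, hac, hNv⟩ := hτ.exists_neighborFinset_eq_union hreg ha
  have hvc : G.Adj v c := by
    rw [← mem_neighborFinset, hNv]
    simp
  obtain ⟨x, hvx, hNa⟩ := hτ.exists_neighborFinset_eq_union hreg ha.symm
  obtain ⟨y, -, hNc⟩ := hτ.exists_neighborFinset_eq_union hreg hvc.symm
  have hax : G.Adj a x := by
    rw [← mem_neighborFinset, hNa]
    simp
  by_cases hxc : x ∈ ({c, τ c} : Finset V)
  · have hF : ∀ w, w ∈ G.closedTwinNbhd τ v := fun w =>
      (hc.preconnected v w).some.mem_of_adj_closed (s := ↑(G.closedTwinNbhd τ v))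
        (fun z hz w hzw => hτ.neighborFinset_subset_of_mem_pair ha hNv hNa hNc hxc hz
          ((mem_neighborFinset _ _ _).2 hzw)) (by simp [closedTwinNbhd])
    calc Fintype.card V = #(univ : Finset V) := card_univ.symm
      _ ≤ #(G.closedTwinNbhd τ v) := card_le_card fun w _ => hF w
      _ ≤ 2 + 4 := (card_union_le _ _).trans
          (add_le_add card_le_two (card_neighborFinset_eq_degree G v ▸ hreg v).le)
  · have hxF : x ∉ G.closedTwinNbhd τ v := by
      rw [closedTwinNbhd, hNv, mem_union, mem_union, not_or, not_or]
      exact ⟨disjoint_right.1 hvx (mem_insert_self x _), hτ.notMem_pair_of_adj hax, hxc⟩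
    obtain ⟨u, hu, p, hp⟩ := hτ.exists_walk_to_pair_avoiding hreg hNv hNa hNc hxF
    have hcu : G.Adj c u := by
      rw [← mem_neighborFinset, hNc]
      exact mem_union_right _ hu
    exact (hK (hτ.hasMinor_K33_of_walk ha hvc (disjoint_right.1 hac (mem_insert_self c _)) hax
      hcu p hp)).elim

end Finite

end IsTwinInvolution

end SimpleGraph

/-- In a connected 4-regular on at least 7 vertices planar graph there is a vertex whose exact
neighborhood is not shared by any other vertex. -/
theorem stmt7 {V : Type*} [Fintype V] (G : SimpleGraph V)
    (hc : G.Connected) (h7 : 7 ≤ Fintype.card V) (hp : IsPlanar G)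
    (hreg : ∀ v, (G.neighborSet v).ncard = 4) :
    ∃ v : V, ∀ w : V, w ≠ v → G.neighborSet w ≠ G.neighborSet v := by
  classical
  have hreg4 : G.IsRegularOfDegree 4 := fun v => by
    rw [← G.card_neighborSet_eq_degree, ← Nat.card_eq_fintype_card, Nat.card_coe_set_eq, hreg]
  by_contra! htwin
  obtain ⟨τ, hτ⟩ := G.exists_isTwinInvolution hp.2 (fun v => by rw [hreg]; norm_num) htwin
  have := hτ.card_le_six hreg4 hc hp.2
  omega
end

section
/- Cycles on n ≥ 5 vertices are strongly T₃-reconstructible: if G is a finite simple connected graph on vertex set ℤ/nℤ (n ≥ 5) with T₃(G) = { {i, i+1, i+2} : i ∈ ℤ/nℤ }, then G is exactly the cycle with edges {i, i+1}. -/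
/-- The set of connected triples of a graph: `3`-subsets of the vertex set
inducing a connected subgraph. -/
def connTriples {V : Type*} (G : SimpleGraph V) : Set (Finset V) :=
  {X | X.card = 3 ∧ (G.induce (X : Set V)).Connected}

/-- The cycle graph on `ℤ/nℤ`, with edges `{i, i+1}`. -/
def cycleGraph (n : ℕ) : SimpleGraph (ZMod n) :=
  SimpleGraph.fromRel (fun i j => j = i + 1)

lemma card3 {α : Type*} [DecidableEq α] {a b c : α} (hab : a ≠ b) (hac : a ≠ c) (hbc : b ≠ c) :
    ({a, b, c} : Finset α).card = 3 := by
  rw [Finset.card_insert_of_notMem (by simp [hab, hac]),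
    Finset.card_insert_of_notMem (by simp [hbc]), Finset.card_singleton]

lemma connA {V : Type*} [DecidableEq V] (G : SimpleGraph V) {a b c : V}
    (hab : G.Adj a b) (h : G.Adj a c ∨ G.Adj b c) :
    (G.induce (({a, b, c} : Finset V) : Set V)).Connected := by
  have ha : a ∈ (({a, b, c} : Finset V) : Set V) := by simp
  have hb : b ∈ (({a, b, c} : Finset V) : Set V) := by simp
  have hcc : c ∈ (({a, b, c} : Finset V) : Set V) := by simp
  haveI : Nonempty (({a, b, c} : Finset V) : Set V) := ⟨⟨a, ha⟩⟩
  apply SimpleGraph.Connected.mk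
  have key : ∀ v : (({a, b, c} : Finset V) : Set V),
      (G.induce (({a, b, c} : Finset V) : Set V)).Reachable ⟨a, ha⟩ v := by
    rintro ⟨v, hv⟩
    have hv' : v = a ∨ v = b ∨ v = c := by simpa using hv
    have hreach_b : (G.induce (({a, b, c} : Finset V) : Set V)).Reachable ⟨a, ha⟩ ⟨b, hb⟩ :=
      SimpleGraph.Adj.reachable (by exact hab)
    rcases hv' with rfl | rfl | rfl
    · rfl
    · exact hreach_b
    · rcases h with h | h
      · exact SimpleGraph.Adj.reachable (by exact h)
      · exact hreach_b.trans (SimpleGraph.Adj.reachable (by exact h))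
  intro u v
  exact (key u).symm.trans (key v)

lemma exists_adj_of_connected {V : Type*} (G : SimpleGraph V) (X : Finset V)
    (hc : (G.induce (X : Set V)).Connected) {x : V} (hx : x ∈ X) (hcard : 2 ≤ X.card) :
    ∃ y ∈ X, G.Adj x y := by
  by_contra h
  push_neg at h
  have hx' : x ∈ (X : Set V) := hx
  have hiso : ∀ v : (X : Set V), ¬ (G.induce (X : Set V)).Adj ⟨x, hx'⟩ v := by
    rintro ⟨v, hv⟩ hadj
    exact h v hv hadj
  have hforce : ∀ v : (X : Set V),
      (G.induce (X : Set V)).Reachable ⟨x, hx'⟩ v → v = ⟨x, hx'⟩ := by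
    rintro v ⟨w⟩
    cases w with
    | nil => rfl
    | cons hadj p => exact absurd hadj (hiso _)
  obtain ⟨y, hy, hyx⟩ := Finset.exists_mem_ne (show 1 < X.card by omega) x
  have hy' : y ∈ (X : Set V) := hy
  have := hforce ⟨y, hy'⟩ (hc.preconnected _ _)
  exact hyx (congrArg Subtype.val this)

lemma two_of_three {V : Type*} [DecidableEq V] (G : SimpleGraph V) {a b c : V}
    (hconn : (G.induce (({a, b, c} : Finset V) : Set V)).Connected)
    (hab : a ≠ b) (hac : a ≠ c) (hbc : b ≠ c) :
    (G.Adj a b ∧ G.Adj b c) ∨ (G.Adj a b ∧ G.Adj a c) ∨ (G.Adj a c ∧ G.Adj b c) := by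
  have hcard : 2 ≤ ({a, b, c} : Finset V).card := by rw [card3 hab hac hbc]; omega
  have hA : G.Adj a b ∨ G.Adj a c := by
    obtain ⟨y, hy, hadj⟩ := exists_adj_of_connected G _ hconn
      (show a ∈ ({a, b, c} : Finset V) by simp) hcard
    have hy' : y = a ∨ y = b ∨ y = c := by simpa using hy
    rcases hy' with rfl | rfl | rfl
    · exact absurd hadj (G.irrefl)
    · exact Or.inl hadj
    · exact Or.inr hadj
  have hB : G.Adj a b ∨ G.Adj b c := by
    obtain ⟨y, hy, hadj⟩ := exists_adj_of_connected G _ hconn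
      (show b ∈ ({a, b, c} : Finset V) by simp) hcard
    have hy' : y = a ∨ y = b ∨ y = c := by simpa using hy
    rcases hy' with rfl | rfl | rfl
    · exact Or.inl hadj.symm
    · exact absurd hadj (G.irrefl)
    · exact Or.inr hadj
  have hC : G.Adj a c ∨ G.Adj b c := by
    obtain ⟨y, hy, hadj⟩ := exists_adj_of_connected G _ hconn
      (show c ∈ ({a, b, c} : Finset V) by simp) hcard
    have hy' : y = a ∨ y = b ∨ y = c := by simpa using hy
    rcases hy' with rfl | rfl | rfl
    · exact Or.inl hadj.symm
    · exact Or.inr hadj.symm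
    · exact absurd hadj (G.irrefl)
  rcases hA with h | h
  · rcases hC with h' | h'
    · exact Or.inr (Or.inl ⟨h, h'⟩)
    · exact Or.inl ⟨h, h'⟩
  · rcases hB with h' | h'
    · exact Or.inr (Or.inl ⟨h', h⟩)
    · exact Or.inr (Or.inr ⟨h, h'⟩)

lemma exists_third {V : Type*} (G : SimpleGraph V) (hc : G.Connected) {a b c0 : V}
    (h0a : c0 ≠ a) (h0b : c0 ≠ b) (hab : G.Adj a b) :
    ∃ c, c ≠ a ∧ c ≠ b ∧ (G.Adj a c ∨ G.Adj b c) := by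
  by_contra h
  push_neg at h
  have step : ∀ {u v : V}, (u = a ∨ u = b) → G.Adj u v → (v = a ∨ v = b) := by
    rintro u v hu hadj
    by_contra hv
    push_neg at hv
    obtain ⟨h1, h2⟩ := h v hv.1 hv.2
    rcases hu with rfl | rfl
    · exact h1 hadj
    · exact h2 hadj
  have walk : ∀ {u v : V} (_ : G.Walk u v), (u = a ∨ u = b) → (v = a ∨ v = b) := by
    intro u v w
    induction w with
    | nil => exact id
    | cons hadj p ih => exact fun hu => ih (step hu hadj)
  obtain ⟨w⟩ := hc.preconnected a c0
  rcases walk w (Or.inl rfl) with h1 | h2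
  · exact h0a h1
  · exact h0b h2

lemma cast_nz {n : ℕ} (hn : 5 ≤ n) {k : ℕ} (h0 : 0 < k) (h5 : k < 5) :
    ((k : ℕ) : ZMod n) ≠ 0 := by
  haveI : NeZero n := ⟨by omega⟩
  intro h
  have := congrArg ZMod.val h
  rw [ZMod.val_cast_of_lt (by omega), ZMod.val_zero] at this
  omega

lemma not_consec {n : ℕ} (hn : 5 ≤ n) (i : ZMod n) :
    ¬ ∃ k : ZMod n, ({i, i + 2, i + 3} : Finset (ZMod n)) = {k, k + 1, k + 2} := by
  have c1 : (1 : ZMod n) ≠ 0 := by exact_mod_cast cast_nz hn (k := 1) (by norm_num) (by norm_num)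
  have c2 : (2 : ZMod n) ≠ 0 := by exact_mod_cast cast_nz hn (k := 2) (by norm_num) (by norm_num)
  have c3 : (3 : ZMod n) ≠ 0 := by exact_mod_cast cast_nz hn (k := 3) (by norm_num) (by norm_num)
  have c4 : (4 : ZMod n) ≠ 0 := by exact_mod_cast cast_nz hn (k := 4) (by norm_num) (by norm_num)
  rintro ⟨k, hk⟩
  have hi : i ∈ ({k, k + 1, k + 2} : Finset (ZMod n)) := hk ▸ (by simp)
  have h2 : i + 2 ∈ ({k, k + 1, k + 2} : Finset (ZMod n)) := hk ▸ (by simp)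
  have h3 : i + 3 ∈ ({k, k + 1, k + 2} : Finset (ZMod n)) := hk ▸ (by simp)
  simp only [Finset.mem_insert, Finset.mem_singleton] at hi h2 h3
  rcases hi with rfl | hi | hi
  · rcases h3 with h | h | h
    · exact c3 (by linear_combination h)
    · exact c2 (by linear_combination h)
    · exact c1 (by linear_combination h)
  · rcases h2 with h | h | h
    · exact c3 (by linear_combination h - hi)
    · exact c2 (by linear_combination h - hi)
    · exact c1 (by linear_combination h - hi)
  · rcases h2 with h | h | h
    · exact c4 (by linear_combination h - hi)
    · exact c3 (by linear_combination h - hi)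
    · exact c2 (by linear_combination h - hi)

/-- Cycles on `n ≥ 5` vertices are strongly `T₃`-reconstructible: any connected
graph on `ℤ/nℤ` whose connected triples are exactly the sets `{i, i+1, i+2}`
is the cycle. -/
theorem stmt9 (n : ℕ) (hn : 5 ≤ n) (G : SimpleGraph (ZMod n)) (hc : G.Connected)
    (hT : connTriples G =
      {X : Finset (ZMod n) | ∃ i : ZMod n, X = {i, i + 1, i + 2}}) :
    G = cycleGraph n := by
  have c1 : (1 : ZMod n) ≠ 0 := by exact_mod_cast cast_nz hn (k := 1) (by norm_num) (by norm_num)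
  have c2 : (2 : ZMod n) ≠ 0 := by exact_mod_cast cast_nz hn (k := 2) (by norm_num) (by norm_num)
  have c3 : (3 : ZMod n) ≠ 0 := by exact_mod_cast cast_nz hn (k := 3) (by norm_num) (by norm_num)
  have key : ∀ {x y : ZMod n} (c : ZMod n), c ≠ 0 → y - x = c → x ≠ y := by
    rintro x y c hc0 hxy rfl
    exact hc0 (by linear_combination hxy.symm)
  have hTconn : ∀ i : ZMod n,
      (G.induce ((({i, i + 1, i + 2} : Finset (ZMod n))) : Set (ZMod n))).Connected := by
    intro i
    have : ({i, i + 1, i + 2} : Finset (ZMod n)) ∈ connTriples G := by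
      rw [hT]; exact ⟨i, rfl⟩
    exact this.2
  -- no edges at distance 2
  have no2 : ∀ i : ZMod n, ¬ G.Adj i (i + 2) := by
    intro i h2
    have hα : ¬ G.Adj (i + 2) (i + 3) := by
      intro h'
      have hmem : ({i, i + 2, i + 3} : Finset (ZMod n)) ∈ connTriples G :=
        ⟨card3 (key 2 c2 (by ring)) (key 3 c3 (by ring)) (key 1 c1 (by ring)),
          connA G h2 (Or.inr h')⟩
      rw [hT] at hmem
      exact not_consec hn i hmem
    have hconn1 : (G.induce ((({i + 1, i + 2, i + 3} : Finset (ZMod n))) : Set (ZMod n))).Connected := by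
      have := hTconn (i + 1)
      rwa [show (i + 1 + 1 : ZMod n) = i + 2 by ring, show (i + 1 + 2 : ZMod n) = i + 3 by ring]
        at this
    have e2 : G.Adj (i + 1) (i + 3) := by
      rcases two_of_three G hconn1 (key 1 c1 (by ring)) (key 2 c2 (by ring)) (key 1 c1 (by ring))
        with ⟨h, h'⟩ | ⟨h, h'⟩ | ⟨h, h'⟩
      · exact absurd h' hα
      · exact h'
      · exact h
    have hγ : ¬ G.Adj (i + 3) (i + 4) := by
      intro h'
      have hmem : ({i + 1, i + 3, i + 4} : Finset (ZMod n)) ∈ connTriples G :=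
        ⟨card3 (key 2 c2 (by ring)) (key 3 c3 (by ring)) (key 1 c1 (by ring)),
          connA G e2 (Or.inr h')⟩
      rw [hT] at hmem
      have := not_consec hn (i + 1)
      rw [show (i + 1 + 2 : ZMod n) = i + 3 by ring, show (i + 1 + 3 : ZMod n) = i + 4 by ring]
        at this
      exact this hmem
    have hconn2 : (G.induce ((({i + 2, i + 3, i + 4} : Finset (ZMod n))) : Set (ZMod n))).Connected := by
      have := hTconn (i + 2)
      rwa [show (i + 2 + 1 : ZMod n) = i + 3 by ring, show (i + 2 + 2 : ZMod n) = i + 4 by ring]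
        at this
    rcases two_of_three G hconn2 (key 1 c1 (by ring)) (key 2 c2 (by ring)) (key 1 c1 (by ring))
      with ⟨h, h'⟩ | ⟨h, h'⟩ | ⟨h, h'⟩
    · exact hα h
    · exact hα h
    · exact hγ h'
  -- consecutive edges exist
  have e1 : ∀ i : ZMod n, G.Adj i (i + 1) := by
    intro i
    rcases two_of_three G (hTconn i) (key 1 c1 (by ring)) (key 2 c2 (by ring)) (key 1 c1 (by ring))
      with ⟨h, h'⟩ | ⟨h, h'⟩ | ⟨h, h'⟩
    · exact h
    · exact h
    · exact absurd h (no2 i)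
  -- classification of edges
  have hclass : ∀ a b : ZMod n, G.Adj a b → b = a + 1 ∨ a = b + 1 := by
    intro a b hab
    obtain ⟨c0, hca, hcb⟩ : ∃ c0 : ZMod n, c0 ≠ a ∧ c0 ≠ b := by
      by_cases hb : b = a + 1
      · exact ⟨a + 2, (key 2 c2 (by ring)).symm, by rw [hb]; exact (key 1 c1 (by ring)).symm⟩
      · exact ⟨a + 1, (key 1 c1 (by ring)).symm, fun h => hb h.symm⟩
    obtain ⟨c, hc1, hc2', hor⟩ := exists_third G hc hca hcb hab
    have hne_ab : a ≠ b := G.ne_of_adj hab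
    have hmem : ({a, b, c} : Finset (ZMod n)) ∈ connTriples G :=
      ⟨card3 hne_ab (Ne.symm hc1) (Ne.symm hc2'), connA G hab hor⟩
    rw [hT] at hmem
    obtain ⟨k, hk⟩ := hmem
    have hA : a ∈ ({k, k + 1, k + 2} : Finset (ZMod n)) := hk ▸ (by simp)
    have hB : b ∈ ({k, k + 1, k + 2} : Finset (ZMod n)) := hk ▸ (by simp)
    simp only [Finset.mem_insert, Finset.mem_singleton] at hA hB
    rcases hA with rfl | rfl | rfl
    · rcases hB with hb | hb | hb
      · exact absurd hb.symm hne_ab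
      · exact Or.inl hb
      · rw [hb] at hab; exact absurd hab (no2 _)
    · rcases hB with hb | hb | hb
      · exact Or.inr (by rw [hb])
      · exact absurd hb.symm hne_ab
      · exact Or.inl (by rw [hb]; ring)
    · rcases hB with hb | hb | hb
      · rw [hb] at hab; exact absurd hab.symm (no2 _)
      · exact Or.inr (by rw [hb]; ring)
      · exact absurd hb.symm hne_ab
  ext a b
  show G.Adj a b ↔ (cycleGraph n).Adj a b
  rw [show (cycleGraph n).Adj a b ↔ a ≠ b ∧ (b = a + 1 ∨ a = b + 1) from
    SimpleGraph.fromRel_adj _ a b]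
  constructor
  · intro h
    exact ⟨G.ne_of_adj h, hclass a b h⟩
  · rintro ⟨hne, h | h⟩
    · rw [h]; exact e1 a
    · rw [h]; exact (e1 b).symm
end

section
/- Let G be a finite simple connected graph containing vertices u, v, v₁, v₂ such that uv, uv₁, vv₁ ∈ E(G), vv₂ ∈ E(G), uv₂ ∉ E(G), and v₁v₂ ∉ E(G) (configuration F₁ of the paper: a triangle uvv₁ with a pendant neighbor v₂ of v). Then the edge uv is necessary: there is no graph H on the same vertex set with uv ∉ E(H) and T₃(H) = T₃(G). -/
namespace SimpleGraph

variable {V : Type*} {G : SimpleGraph V}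

lemma Connected.exists_adj_of_induce {s : Set V} (hs : (G.induce s).Connected)
    {x y : V} (hx : x ∈ s) (hy : y ∈ s) (hxy : x ≠ y) : ∃ z ∈ s, G.Adj x z := by
  have : Nontrivial s := ⟨⟨x, hx⟩, ⟨y, hy⟩, by simpa using hxy⟩
  obtain ⟨z, hz⟩ := hs.preconnected.exists_adj_of_nontrivial ⟨x, hx⟩
  exact ⟨z, z.2, hz⟩

end SimpleGraph

section

variable {V : Type*} {G : SimpleGraph V} [DecidableEq V] {a b c : V}

lemma insert_mem_connTriples_of_adj_of_adj (hac : G.Adj a c) (hbc : G.Adj b c) (hab : a ≠ b) :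
    ({a, b, c} : Finset V) ∈ connTriples G := by
  refine ⟨Finset.card_eq_three.mpr ⟨a, b, c, hab, hac.ne, hbc.ne, rfl⟩, ?_⟩
  let p : G.Walk a b := .cons hac (.cons hbc.symm .nil)
  have hp : (({a, b, c} : Finset V) : Set V) = {x | x ∈ p.support} := by
    ext
    simp [p, or_comm]
  exact hp ▸ p.connected_induce_support

lemma adj_of_insert_mem_connTriples_of_not_adj (h : ({a, b, c} : Finset V) ∈ connTriples G)
    (hab : ¬ G.Adj a b) : G.Adj a c ∧ G.Adj b c := by
  obtain ⟨hcard, hconn⟩ := h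
  have hne : a ≠ b := by
    rintro rfl
    have := Finset.card_le_two (a := a) (b := c)
    simp_all
  obtain ⟨x, hx, hax⟩ := hconn.exists_adj_of_induce (by simp) (by simp) hne
  obtain ⟨y, hy, hby⟩ := hconn.exists_adj_of_induce (by simp) (by simp) hne.symm
  simp only [Finset.coe_insert, Finset.coe_singleton, Set.mem_insert_iff,
    Set.mem_singleton_iff] at hx hy
  rcases hx with rfl | rfl | rfl <;> rcases hy with rfl | rfl | rfl <;>
    simp_all [G.adj_comm]

end

theorem stmt12_general {V : Type*} (G : SimpleGraph V)
    (u v v₁ v₂ : V)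
    (h1 : G.Adj u v) (h2 : G.Adj u v₁) (h3 : G.Adj v v₁) (h4 : G.Adj v v₂)
    (h5 : ¬ G.Adj u v₂) (h6 : ¬ G.Adj v₁ v₂)
    (h7 : u ≠ v₂) (h8 : v₁ ≠ v₂) :
    ¬ ∃ H : SimpleGraph V, ¬ H.Adj u v ∧ connTriples H = connTriples G := by
  classical
  rintro ⟨H, hHuv, hT⟩
  have huv₂ : H.Adj u v₂ := by
    have hG := insert_mem_connTriples_of_adj_of_adj h1 h4.symm h7
    rw [Finset.pair_comm v₂ v, ← hT] at hG
    exact (adj_of_insert_mem_connTriples_of_not_adj hG hHuv).1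
  have huv₁ : H.Adj u v₁ := (adj_of_insert_mem_connTriples_of_not_adj
    (hT ▸ insert_mem_connTriples_of_adj_of_adj h2 h3 h1.ne) hHuv).1
  have hG : ({v₁, v₂, u} : Finset V) ∈ connTriples G :=
    hT ▸ insert_mem_connTriples_of_adj_of_adj huv₁.symm huv₂.symm h8
  exact h5 (adj_of_insert_mem_connTriples_of_not_adj hG h6).2.symm

/-- Configuration `F₁`: a triangle `u v v₁` together with a vertex `v₂` adjacent
to `v` but to neither `u` nor `v₁` forces the edge `uv` to be necessary. -/
theorem stmt12 {V : Type*} [Fintype V] (G : SimpleGraph V) (hc : G.Connected)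
    (u v v₁ v₂ : V)
    (h1 : G.Adj u v) (h2 : G.Adj u v₁) (h3 : G.Adj v v₁) (h4 : G.Adj v v₂)
    (h5 : ¬ G.Adj u v₂) (h6 : ¬ G.Adj v₁ v₂)
    (h7 : u ≠ v₂) (h8 : v₁ ≠ v₂) :
    ¬ ∃ H : SimpleGraph V, ¬ H.Adj u v ∧ connTriples H = connTriples G :=
  stmt12_general G u v v₁ v₂ h1 h2 h3 h4 h5 h6 h7 h8
end

section
/- Let G be a finite simple connected graph containing vertices u, v, v₁, v₂ such that uv, vv₁, vv₂ ∈ E(G) and uv₁, uv₂ ∉ E(G) (configuration F₂: v adjacent to u, v₁, v₂ while u is adjacent to neither v₁ nor v₂; the status of v₁v₂ is arbitrary). Then the edge uv is necessary: no graph H on the same vertex set with uv ∉ E(H) satisfies T₃(H) = T₃(G). -/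
lemma aux_forced {V : Type*} {G : SimpleGraph V} {a b c : V} (hab : a ≠ b)
    (hnadj : ¬ G.Adj a b)
    (h : (G.induce ({a, b, c} : Set V)).Connected) : G.Adj a c := by
  obtain ⟨w⟩ := h.preconnected ⟨a, by simp⟩ ⟨b, by simp⟩
  have hnil : ¬ w.Nil := SimpleGraph.Walk.not_nil_of_ne (by simpa using hab)
  have hadj : G.Adj a (w.getVert 1 : V) := w.adj_snd hnil
  have hmem := (w.getVert 1).2
  rcases hmem with h' | h' | h'
  · rw [show ((w.getVert 1 : V) = a) from h'] at hadj
    exact absurd hadj (G.irrefl)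
  · rw [show ((w.getVert 1 : V) = b) from h'] at hadj
    exact absurd hadj hnadj
  · rw [show ((w.getVert 1 : V) = c) from h'] at hadj
    exact hadj

lemma aux_conn {V : Type*} {G : SimpleGraph V} {a b c : V} (h1 : G.Adj a b)
    (h2 : G.Adj b c) : (G.induce ({a, b, c} : Set V)).Connected := by
  rw [SimpleGraph.connected_iff]
  constructor
  · have key : ∀ x : ({a, b, c} : Set V), (G.induce ({a, b, c} : Set V)).Reachable x ⟨b, by simp⟩ := by
      rintro ⟨x, hx | hx | hx⟩
      · subst hx
        exact SimpleGraph.Adj.reachable (by simpa using h1)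
      · subst hx
        exact SimpleGraph.Reachable.refl _
      · subst hx
        exact SimpleGraph.Adj.reachable (by simpa using h2.symm)
    intro x y
    exact (key x).trans (key y).symm
  · exact ⟨⟨b, by simp⟩⟩

/-- Configuration `F₂`: `v` adjacent to `u`, `v₁`, `v₂` while `u` is adjacent to
neither `v₁` nor `v₂` (the status of `v₁v₂` arbitrary) forces the edge `uv` to
be necessary. -/
theorem stmt13 {V : Type*} [Fintype V] (G : SimpleGraph V) (hc : G.Connected)
    (u v v₁ v₂ : V)
    (h1 : G.Adj u v) (h2 : G.Adj v v₁) (h3 : G.Adj v v₂)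
    (h4 : ¬ G.Adj u v₁) (h5 : ¬ G.Adj u v₂)
    (h6 : v₁ ≠ v₂) (h7 : u ≠ v₁) (h8 : u ≠ v₂) :
    ¬ ∃ H : SimpleGraph V, ¬ H.Adj u v ∧ connTriples H = connTriples G := by
  classical
  rintro ⟨H, hHuv, hT⟩
  have huv : u ≠ v := h1.ne
  have hvv1 : v ≠ v₁ := h2.ne
  have hvv2 : v ≠ v₂ := h3.ne
  -- {u, v, v₁} is a connected triple of G
  have t1G : ({u, v, v₁} : Finset V) ∈ connTriples G := by
    refine ⟨Finset.card_eq_three.mpr ⟨u, v, v₁, huv, h7, hvv1, rfl⟩, ?_⟩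
    have : ((({u, v, v₁} : Finset V) : Set V)) = ({u, v, v₁} : Set V) := by simp
    rw [this]
    exact aux_conn h1 h2
  have t2G : ({u, v, v₂} : Finset V) ∈ connTriples G := by
    refine ⟨Finset.card_eq_three.mpr ⟨u, v, v₂, huv, h8, hvv2, rfl⟩, ?_⟩
    have : ((({u, v, v₂} : Finset V) : Set V)) = ({u, v, v₂} : Set V) := by simp
    rw [this]
    exact aux_conn h1 h3
  rw [← hT] at t1G t2G
  -- hence H.Adj u v₁ and H.Adj u v₂
  have hu1 : H.Adj u v₁ := by
    have := t1G.2
    rw [show ((({u, v, v₁} : Finset V) : Set V)) = ({u, v, v₁} : Set V) by simp] at this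
    exact aux_forced huv hHuv this
  have hu2 : H.Adj u v₂ := by
    have := t2G.2
    rw [show ((({u, v, v₂} : Finset V) : Set V)) = ({u, v, v₂} : Set V) by simp] at this
    exact aux_forced huv hHuv this
  -- so {u, v₁, v₂} is a connected triple of H, hence of G
  have t3H : ({u, v₁, v₂} : Finset V) ∈ connTriples H := by
    refine ⟨Finset.card_eq_three.mpr ⟨u, v₁, v₂, h7, h8, h6, rfl⟩, ?_⟩
    have : ((({u, v₁, v₂} : Finset V) : Set V)) = ({v₁, u, v₂} : Set V) := by
      ext x; simp; tauto
    rw [this]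
    exact aux_conn hu1.symm hu2
  rw [hT] at t3H
  have := t3H.2
  rw [show ((({u, v₁, v₂} : Finset V) : Set V)) = ({u, v₁, v₂} : Set V) by simp] at this
  exact h5 (aux_forced h7 h4 this)
end

section
/- In a finite simple connected graph G on n ≥ 5 vertices with the property that N(v₁) ≠ N(v₂) for all distinct non-adjacent vertices v₁, v₂, every edge of G that is not contained in any triangle is necessary. -/
/-!
If `H` has the connected triples of `G` but lacks the edge `uv`, which lies in no triangle of `G`,
then every other `G`-neighbour of `u` or `v` is an `H`-neighbour of both, while no vertex can have
two `H`-neighbours that are not `G`-neighbours (they would span a connected triple of `H` but not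
of `G`). For a second neighbour `b` of `v` this forces `N(v) = {u, b}` and `N(u) ⊆ N(b)`; since
`u` and `b` are non-adjacent, the neighbourhood condition provides some `e ∈ N(b) \ N(u)`, and it
is the only new `H`-neighbour of `v`. Hence `N(u) = {v}`, `N(b) ⊆ {v, e}` and `N(e) = {b}`, so the connected
graph `G` has just the four vertices `u, v, b, e`.
-/

open Finset SimpleGraph

section

variable {V : Type*}

theorem SimpleGraph.Connected.card_le_of_forall_adj_mem [Fintype V] {G : SimpleGraph V}
    (hc : G.Connected) {s : Finset V} {a : V} (ha : a ∈ s)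
    (hs : ∀ x ∈ s, ∀ y, G.Adj x y → y ∈ s) : Fintype.card V ≤ #s := by
  suffices s = univ by simp [this]
  refine eq_univ_of_forall fun y => by_contra fun hy => ?_
  obtain ⟨d, -, hd, hd'⟩ := (hc.preconnected a y).some.exists_boundary_dart (s : Set V) ha hy
  exact hd' (hs _ hd _ d.adj)

section ConnTriples

variable [DecidableEq V] {G H : SimpleGraph V}

theorem insert_mem_connTriples_of_adj {x y z : V} (hy : G.Adj x y) (hz : G.Adj x z)
    (hyz : y ≠ z) : {x, y, z} ∈ connTriples G := by
  refine ⟨card_eq_three.2 ⟨x, y, z, hy.ne, hz.ne, hyz, rfl⟩, ?_⟩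
  have hunion : (({x, y, z} : Finset V) : Set V) = {x, y} ∪ {x, z} := by
    ext
    simp only [coe_insert, coe_singleton, Set.mem_insert_iff, Set.mem_union, Set.mem_singleton_iff]
    tauto
  rw [hunion]
  exact induce_union_connected (induce_pair_connected_of_adj hy).preconnected
    (induce_pair_connected_of_adj hz).preconnected ⟨x, by simp⟩

theorem adj_of_insert_mem_connTriples {x y z : V} (h : {x, y, z} ∈ connTriples G)
    (hxy : ¬ G.Adj x y) : G.Adj z x ∧ G.Adj z y := by
  obtain ⟨hcard, hconn⟩ := h
  have : Nontrivial (({x, y, z} : Finset V) : Set V) := by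
    rw [Set.nontrivial_coe_sort, nontrivial_coe, ← one_lt_card_iff_nontrivial, hcard]
    norm_num
  have exists_adj (a : V) (ha : a ∈ ({x, y, z} : Finset V)) :
      ∃ c ∈ ({x, y, z} : Finset V), G.Adj a c := by
    obtain ⟨c, hc⟩ := hconn.preconnected.exists_adj_of_nontrivial ⟨a, ha⟩
    exact ⟨c, c.2, hc⟩
  have hxz : G.Adj x z := by
    obtain ⟨c, hc, hxc⟩ := exists_adj x (by simp)
    simp only [mem_insert, mem_singleton] at hc
    rcases hc with rfl | rfl | rfl
    · exact absurd hxc G.irrefl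
    · exact absurd hxc hxy
    · exact hxc
  have hyz : G.Adj y z := by
    obtain ⟨c, hc, hyc⟩ := exists_adj y (by simp)
    simp only [mem_insert, mem_singleton] at hc
    rcases hc with rfl | rfl | rfl
    · exact absurd hyc.symm hxy
    · exact absurd hyc G.irrefl
    · exact hyc
  exact ⟨hxz.symm, hyz.symm⟩

theorem adj_and_adj_of_connTriples_eq (hT : connTriples H = connTriples G) {u v w : V}
    (huv : G.Adj u v) (hHuv : ¬ H.Adj u v) (hvw : G.Adj v w) (hwu : w ≠ u) :
    H.Adj w u ∧ H.Adj w v := by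
  have hG : {v, u, w} ∈ connTriples G := insert_mem_connTriples_of_adj huv.symm hvw hwu.symm
  rw [insert_comm, ← hT] at hG
  exact adj_of_insert_mem_connTriples hG hHuv

theorem eq_of_adj_of_not_adj_of_connTriples_eq (hT : connTriples H = connTriples G) {x a b : V}
    (ha : H.Adj x a) (hb : H.Adj x b) (hGa : ¬ G.Adj x a) (hGb : ¬ G.Adj x b) : a = b := by
  by_contra hab
  have hG := insert_mem_connTriples_of_adj ha hb hab
  rw [hT] at hG
  exact hGb (adj_of_insert_mem_connTriples hG hGa).1.symm

end ConnTriples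

structure MissesTriangleFreeEdge (G H : SimpleGraph V) (u v : V) : Prop where
  connTriples_eq : connTriples H = connTriples G
  adj : G.Adj u v
  not_adj : ¬ H.Adj u v
  not_adj_and_adj : ∀ w, ¬ (G.Adj u w ∧ G.Adj v w)

namespace MissesTriangleFreeEdge

theorem symm {G H : SimpleGraph V} {u v : V} (h : MissesTriangleFreeEdge G H u v) :
    MissesTriangleFreeEdge G H v u where
  connTriples_eq := h.connTriples_eq
  adj := h.adj.symm
  not_adj := fun h' => h.not_adj h'.symm
  not_adj_and_adj := fun w hw => h.not_adj_and_adj w hw.symm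

variable [DecidableEq V] {G H : SimpleGraph V} {u v b : V}

theorem adj_and_adj (h : MissesTriangleFreeEdge G H u v) {w : V} (hvw : G.Adj v w)
    (hwu : w ≠ u) : H.Adj w u ∧ H.Adj w v :=
  adj_and_adj_of_connTriples_eq h.connTriples_eq h.adj h.not_adj hvw hwu

theorem eq_of_adj_right (h : MissesTriangleFreeEdge G H u v) (hbu : b ≠ u) (hvb : G.Adj v b)
    {w : V} (hvw : G.Adj v w) : w = u ∨ w = b := by
  by_contra! hw
  refine hw.2 (eq_of_adj_of_not_adj_of_connTriples_eq h.connTriples_eq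
    (h.adj_and_adj hvw hw.1).1.symm (h.adj_and_adj hvb hbu).1.symm ?_ ?_)
  · exact fun huw => h.not_adj_and_adj w ⟨huw, hvw⟩
  · exact fun hub => h.not_adj_and_adj b ⟨hub, hvb⟩

theorem adj_of_adj_left (h : MissesTriangleFreeEdge G H u v) (hbu : b ≠ u) (hvb : G.Adj v b)
    {w : V} (huw : G.Adj u w) : G.Adj b w := by
  obtain rfl | hwv := eq_or_ne w v
  · exact hvb.symm
  have hub : ¬ G.Adj u b := fun hub => h.not_adj_and_adj b ⟨hub, hvb⟩
  have hH : {u, b, w} ∈ connTriples H :=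
    insert_mem_connTriples_of_adj (h.adj_and_adj hvb hbu).1.symm
      (h.symm.adj_and_adj huw hwv).2.symm (by rintro rfl; exact hub huw)
  rw [h.connTriples_eq] at hH
  exact (adj_of_insert_mem_connTriples hH hub).2.symm

theorem not_adj_of_adj (h : MissesTriangleFreeEdge G H u v) (hbu : b ≠ u) (hvb : G.Adj v b)
    {e : V} (hbe : G.Adj b e) : ¬ G.Adj v e := by
  intro hve
  rcases h.eq_of_adj_right hbu hvb hve with rfl | rfl
  · exact h.not_adj_and_adj b ⟨hbe.symm, hvb⟩
  · exact G.irrefl hbe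

theorem adj_and_not_adj_of_adj_of_not_adj (h : MissesTriangleFreeEdge G H u v) (hbu : b ≠ u)
    (hvb : G.Adj v b) {e : V} (hbe : G.Adj b e) (hue : ¬ G.Adj u e) :
    H.Adj v e ∧ ¬ H.Adj b e := by
  have hub : ¬ G.Adj u b := fun hub => h.not_adj_and_adj b ⟨hub, hvb⟩
  have hue' : u ≠ e := by rintro rfl; exact hub hbe.symm
  have hve : v ≠ e := by rintro rfl; exact hue h.adj
  have hHbe : ¬ H.Adj b e := by
    intro hHbe
    have hG := insert_mem_connTriples_of_adj (h.adj_and_adj hvb hbu).1 hHbe hue'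
    rw [insert_comm, h.connTriples_eq] at hG
    exact hue (adj_of_insert_mem_connTriples hG hub).1.symm
  have hG := insert_mem_connTriples_of_adj hvb.symm hbe hve
  rw [pair_comm, ← h.connTriples_eq] at hG
  exact ⟨(adj_of_insert_mem_connTriples hG hHbe).2, hHbe⟩

theorem card_le_four [Fintype V] (h : MissesTriangleFreeEdge G H u v) (hc : G.Connected)
    (hN : ∀ v₁ v₂ : V, v₁ ≠ v₂ → ¬ G.Adj v₁ v₂ → G.neighborSet v₁ ≠ G.neighborSet v₂)
    (hbu : b ≠ u) (hvb : G.Adj v b) : Fintype.card V ≤ 4 := by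
  have hub : ¬ G.Adj u b := fun hub => h.not_adj_and_adj b ⟨hub, hvb⟩
  obtain ⟨e, hbe, hue⟩ : ∃ e, G.Adj b e ∧ ¬ G.Adj u e := by
    by_contra! hsub
    exact hN u b hbu.symm hub (Set.ext fun w => ⟨h.adj_of_adj_left hbu hvb, hsub w⟩)
  obtain ⟨hHve, hHbe⟩ := h.adj_and_not_adj_of_adj_of_not_adj hbu hvb hbe hue
  have hve : ¬ G.Adj v e := h.not_adj_of_adj hbu hvb hbe
  have eq_e {w : V} (hHvw : H.Adj v w) (hvw : ¬ G.Adj v w) : w = e :=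
    eq_of_adj_of_not_adj_of_connTriples_eq h.connTriples_eq hHvw hHve hvw hve
  have hNu {w : V} (huw : G.Adj u w) : w = v := by
    by_contra hwv
    obtain rfl := eq_e (h.symm.adj_and_adj huw hwv).1.symm
      (fun hvw => h.not_adj_and_adj w ⟨huw, hvw⟩)
    exact hue huw
  have hNb {w : V} (hbw : G.Adj b w) : w = v ∨ w = e := by
    refine or_iff_not_imp_left.2 fun hwv => ?_
    have huw : ¬ G.Adj u w := fun huw => hwv (hNu huw)
    exact eq_e (h.adj_and_not_adj_of_adj_of_not_adj hbu hvb hbw huw).1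
      (h.not_adj_of_adj hbu hvb hbw)
  have hNe {y : V} (hey : G.Adj e y) : y = b := by
    by_contra hyb
    have hyu : u ≠ y := by rintro rfl; exact hue hey.symm
    have hG := insert_mem_connTriples_of_adj hbe.symm hey (Ne.symm hyb)
    rw [insert_comm, ← h.connTriples_eq] at hG
    have hH := insert_mem_connTriples_of_adj (h.adj_and_adj hvb hbu).1
      (adj_of_insert_mem_connTriples hG hHbe).1.symm hyu
    rw [insert_comm, h.connTriples_eq] at hH
    obtain rfl := hNu (adj_of_insert_mem_connTriples hH hub).1.symm
    exact hve hey.symm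
  calc Fintype.card V ≤ #{u, v, b, e} := hc.card_le_of_forall_adj_mem (a := u) (by simp) ?_
    _ ≤ 4 := Finset.card_le_four
  intro x hx y hxy
  simp only [mem_insert, mem_singleton] at hx ⊢
  rcases hx with rfl | rfl | rfl | rfl
  · exact .inr (.inl (hNu hxy))
  · rcases h.eq_of_adj_right hbu hvb hxy with rfl | rfl <;> simp
  · rcases hNb hxy with rfl | rfl <;> simp
  · exact .inr (.inr (.inl (hNe hxy)))

end MissesTriangleFreeEdge

end

/-- In a connected graph on `n ≥ 5` vertices in which distinct non-adjacent
vertices have distinct neighborhoods, every edge not contained in a triangle is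
necessary. -/
theorem stmt14 {V : Type*} [Fintype V] (G : SimpleGraph V) (hc : G.Connected)
    (h5 : 5 ≤ Fintype.card V)
    (hN : ∀ v₁ v₂ : V, v₁ ≠ v₂ → ¬ G.Adj v₁ v₂ →
      G.neighborSet v₁ ≠ G.neighborSet v₂)
    (u v : V) (huv : G.Adj u v)
    (htri : ∀ w : V, ¬ (G.Adj u w ∧ G.Adj v w)) :
    ¬ ∃ H : SimpleGraph V, ¬ H.Adj u v ∧ connTriples H = connTriples G := by
  classical
  rintro ⟨H, hHuv, hT⟩
  have h : MissesTriangleFreeEdge G H u v := ⟨hT, huv, hHuv, htri⟩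
  obtain ⟨b, hbu, hvb⟩ | ⟨b, hbv, hub⟩ : (∃ b, b ≠ u ∧ G.Adj v b) ∨ (∃ b, b ≠ v ∧ G.Adj u b) := by
    by_contra! hlone
    have : Fintype.card V ≤ #{u, v} := hc.card_le_of_forall_adj_mem (a := u) (by simp) (by
      intro x hx y hxy
      simp only [mem_insert, mem_singleton] at hx ⊢
      rcases hx with rfl | rfl
      · exact .inr (by_contra fun hyv => hlone.2 y hyv hxy)
      · exact .inl (by_contra fun hyu => hlone.1 y hyu hxy))
    have := card_le_two (a := u) (b := v)
    omega
  · have := h.card_le_four hc hN hbu hvb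
    omega
  · have := h.symm.card_le_four hc hN hbv hub
    omega
end

section
/- A tree on n ≥ 5 vertices is strongly T₃-reconstructible if and only if no two leaves have the same parent (i.e., no two distinct leaves are adjacent to the same vertex). -/
/-- A labeled graph `G` is strongly `T₃`-reconstructible if every connected
graph on the same vertex set with the same connected triples equals `G`. -/
def StronglyT3Reconstructible {V : Type*} (G : SimpleGraph V) : Prop :=
  ∀ H : SimpleGraph V, H.Connected → connTriples H = connTriples G → H = G

section Aux

open SimpleGraph

set_option linter.unusedSectionVars false

variable {V : Type*}

lemma reach_exists_adj {G : SimpleGraph V} {u v : V} (h : G.Reachable u v) (hne : u ≠ v) :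
    ∃ w, G.Adj u w := by
  obtain ⟨p⟩ := h
  cases p with
  | nil => exact absurd rfl hne
  | cons h p => exact ⟨_, h⟩

lemma induceConn3 (G : SimpleGraph V) {a b c : V} (h1 : G.Adj a b) (h2 : G.Adj a c) :
    (G.induce ({a, b, c} : Set V)).Connected := by
  rw [SimpleGraph.connected_iff]
  refine ⟨?_, ⟨⟨a, by simp⟩⟩⟩
  have key : ∀ z : ({a, b, c} : Set V), (G.induce ({a, b, c} : Set V)).Reachable ⟨a, by simp⟩ z := by
    rintro ⟨z, hz⟩
    rcases hz with rfl | rfl | rfl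
    · rfl
    · exact SimpleGraph.Adj.reachable (by simp [h1])
    · exact SimpleGraph.Adj.reachable (by simp [h2])
  intro x y
  exact (key x).symm.trans (key y)

lemma isolated_not_conn (G : SimpleGraph V) {x y z : V} (hxy : x ≠ y)
    (h1 : ¬ G.Adj x y) (h2 : ¬ G.Adj x z) :
    ¬ (G.induce ({x, y, z} : Set V)).Connected := by
  intro hconn
  have hr := hconn.preconnected ⟨x, by simp⟩ ⟨y, by simp⟩
  have hne : (⟨x, by simp⟩ : ({x, y, z} : Set V)) ≠ ⟨y, by simp⟩ := by
    simp [Subtype.ext_iff, hxy]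
  obtain ⟨⟨w, hw⟩, hadj⟩ := reach_exists_adj hr hne
  rw [SimpleGraph.comap_adj] at hadj
  rcases hw with rfl | rfl | rfl
  · exact G.irrefl hadj
  · exact h1 hadj
  · exact h2 hadj

lemma conn3 [DecidableEq V] (G : SimpleGraph V) {a b c : V}
    (hab : a ≠ b) (hac : a ≠ c) (hbc : b ≠ c) :
    ({a, b, c} : Finset V) ∈ connTriples G ↔
      (G.Adj a b ∧ G.Adj a c) ∨ (G.Adj b a ∧ G.Adj b c) ∨ (G.Adj c a ∧ G.Adj c b) := by
  have hcard : ({a, b, c} : Finset V).card = 3 := by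
    rw [Finset.card_eq_three]; exact ⟨a, b, c, hab, hac, hbc, rfl⟩
  have hcoe : ((({a, b, c} : Finset V) : Set V)) = ({a, b, c} : Set V) := by simp
  constructor
  · rintro ⟨-, hconn⟩
    rw [hcoe] at hconn
    by_contra hpat
    push_neg at hpat
    obtain ⟨hp1, hp2, hp3⟩ := hpat
    by_cases e1 : G.Adj a b
    · have nac : ¬ G.Adj a c := hp1 e1
      have nbc : ¬ G.Adj b c := hp2 e1.symm
      have := isolated_not_conn G (x := c) (y := a) (z := b) hac.symm
        (fun h => nac h.symm) (fun h => nbc h.symm)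
      rw [show ({c, a, b} : Set V) = {a, b, c} by ext; simp; tauto] at this
      exact this hconn
    · by_cases e2 : G.Adj a c
      · have nbc : ¬ G.Adj c b := hp3 e2.symm
        have := isolated_not_conn G (x := b) (y := a) (z := c) hab.symm
          (fun h => e1 h.symm) (fun h => nbc h.symm)
        rw [show ({b, a, c} : Set V) = {a, b, c} by ext; simp; tauto] at this
        exact this hconn
      · exact isolated_not_conn G hab e1 e2 hconn
  · rintro (⟨h1, h2⟩ | ⟨h1, h2⟩ | ⟨h1, h2⟩)
    · exact ⟨hcard, by rw [hcoe]; exact induceConn3 G h1 h2⟩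
    · refine ⟨hcard, ?_⟩
      rw [hcoe, show ({a, b, c} : Set V) = {b, a, c} by ext; simp; tauto]
      exact induceConn3 G h1 h2
    · refine ⟨hcard, ?_⟩
      rw [hcoe, show ({a, b, c} : Set V) = {c, a, b} by ext; simp; tauto]
      exact induceConn3 G h1 h2

lemma noTri {G : SimpleGraph V} (ha : G.IsAcyclic) {a b c : V}
    (h1 : G.Adj a b) (h2 : G.Adj b c) (h3 : G.Adj a c) : False := by
  have key := SimpleGraph.isAcyclic_iff_path_unique.mp ha
    (⟨Walk.cons h1 (Walk.cons h2 Walk.nil), by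
      rw [SimpleGraph.Walk.isPath_def]; simp [h1.ne, h2.ne, h3.ne]⟩ : G.Path a c)
    (SimpleGraph.Path.singleton h3)
  have hlen := congrArg (fun p : G.Path a c => (p : G.Walk a c).length) key
  simp [SimpleGraph.Path.singleton] at hlen

lemma no4 {G : SimpleGraph V} (ha : G.IsAcyclic) {a b c d : V} (hac : a ≠ c) (hbd : b ≠ d)
    (h1 : G.Adj a b) (h2 : G.Adj b c) (h3 : G.Adj c d) (h4 : G.Adj d a) : False := by
  have key := SimpleGraph.isAcyclic_iff_path_unique.mp ha
    (⟨Walk.cons h1 (Walk.cons h2 Walk.nil), by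
      rw [SimpleGraph.Walk.isPath_def]; simp [h1.ne, h2.ne, hac]⟩ : G.Path a c)
    (⟨Walk.cons h4.symm (Walk.cons h3.symm Walk.nil), by
      rw [SimpleGraph.Walk.isPath_def]; simp [h4.ne', h3.ne', hac]⟩ : G.Path a c)
  have hsup := congrArg (fun p : G.Path a c => (p : G.Walk a c).support) key
  simp at hsup
  exact hbd hsup

lemma exitWalk {G : SimpleGraph V} {S : Set V} {a z : V} (w : G.Walk a z)
    (ha : a ∈ S) (hz : z ∉ S) : ∃ x ∈ S, ∃ y, y ∉ S ∧ G.Adj x y := by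
  induction w with
  | nil => exact absurd ha hz
  | @cons u v _ h p ih =>
      by_cases hv : v ∈ S
      · exact ih hv hz
      · exact ⟨u, ha, v, hv, h⟩

lemma exitEdge {G : SimpleGraph V} (hc : G.Connected) {S : Set V} {a z : V}
    (ha : a ∈ S) (hz : z ∉ S) : ∃ x ∈ S, ∃ y, y ∉ S ∧ G.Adj x y := by
  obtain ⟨w⟩ := hc.preconnected a z
  exact exitWalk w ha hz

lemma exists_outside [Fintype V] (s : Finset V) (h : s.card < Fintype.card V) :
    ∃ z, z ∉ s := by
  by_contra hall
  push_neg at hall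
  have h2 : Finset.univ ⊆ s := fun x _ => hall x
  have := Finset.card_le_card h2
  simp [Finset.card_univ] at this
  omega

end Aux

section Hard

open SimpleGraph

variable {V : Type*} [Fintype V] [DecidableEq V] {G H : SimpleGraph V}

/-- The leaf case of Claim A. -/
lemma caseLeaf (hc : G.Connected) (ha : G.IsAcyclic) (h5 : 5 ≤ Fintype.card V)
    (hT3 : connTriples H = connTriples G) {u v m : V}
    (huv : G.Adj u v) (hnH : ¬ H.Adj u v) (hvm : G.Adj v m) (hnum : ¬ G.Adj u m)
    (hmu : m ≠ u) (hmv : m ≠ v)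
    (huniq : ∀ w, w ≠ u → w ≠ v → (G.Adj u w ∨ G.Adj v w) → w = m) : False := by
  have huvne := huv.ne
  have hnH' : ¬ H.Adj v u := fun h => hnH h.symm
  have hW : ∀ w, w ≠ u → w ≠ v → (G.Adj u w ∨ G.Adj v w) → H.Adj w u ∧ H.Adj w v := by
    intro w hwu hwv hw
    have hmem : ({u, v, w} : Finset V) ∈ connTriples G := by
      rw [conn3 G huvne (Ne.symm hwu) (Ne.symm hwv)]
      rcases hw with h | h
      · exact Or.inl ⟨huv, h⟩
      · exact Or.inr (Or.inl ⟨huv.symm, h⟩)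
    rw [← hT3, conn3 H huvne (Ne.symm hwu) (Ne.symm hwv)] at hmem
    rcases hmem with ⟨h, -⟩ | ⟨h, -⟩ | h
    · exact absurd h hnH
    · exact absurd h hnH'
    · exact h
  have hNu : ∀ w, G.Adj u w → w = v := by
    intro w hw
    by_cases hwv : w = v
    · exact hwv
    · have := huniq w hw.ne' hwv (Or.inl hw)
      subst this
      exact absurd hw hnum
  have hNv : ∀ w, G.Adj v w → w = u ∨ w = m := by
    intro w hw
    by_cases h1 : w = u
    · exact Or.inl h1
    · exact Or.inr (huniq w h1 hw.ne' (Or.inr hw))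
  obtain ⟨hHmu, hHmv⟩ := hW m hmu hmv (Or.inr hvm)
  -- the key property of any `x ∉ {u,v,m}` adjacent to `m`
  have hprop : ∀ x, x ∉ ({u, v, m} : Set V) → G.Adj m x → ¬ H.Adj m x ∧ H.Adj v x := by
    intro x hxS hxm
    simp only [Set.mem_insert_iff, Set.mem_singleton_iff, not_or] at hxS
    obtain ⟨hxu, hxv, hxm'⟩ := hxS
    have hn1 : ({u, m, x} : Finset V) ∉ connTriples G := by
      rw [conn3 G (Ne.symm hmu) (Ne.symm hxu) (Ne.symm hxm')]
      rintro (⟨h1, -⟩ | ⟨h1, -⟩ | ⟨h1, -⟩)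
      · exact hnum h1
      · exact hnum h1.symm
      · exact hxv (hNu x h1.symm)
    rw [← hT3, conn3 H (Ne.symm hmu) (Ne.symm hxu) (Ne.symm hxm')] at hn1
    have hnHmx : ¬ H.Adj m x := fun h => hn1 (Or.inr (Or.inl ⟨hHmu, h⟩))
    have h2 : ({v, m, x} : Finset V) ∈ connTriples G := by
      rw [conn3 G (Ne.symm hmv) (Ne.symm hxv) (Ne.symm hxm')]
      exact Or.inr (Or.inl ⟨hvm.symm, hxm⟩)
    rw [← hT3, conn3 H (Ne.symm hmv) (Ne.symm hxv) (Ne.symm hxm')] at h2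
    rcases h2 with ⟨-, h⟩ | ⟨-, h⟩ | ⟨-, h⟩
    · exact ⟨hnHmx, h⟩
    · exact absurd h hnHmx
    · exact absurd h.symm hnHmx
  -- there is such an x
  obtain ⟨z, hz⟩ := exists_outside ({u, v, m} : Finset V) (by
    have h1 := Finset.card_insert_le u ({v, m} : Finset V)
    have h2 := Finset.card_insert_le v ({m} : Finset V)
    have h3 : ({m} : Finset V).card = 1 := Finset.card_singleton m
    omega)
  have hzS : z ∉ ({u, v, m} : Set V) := by simpa using hz
  obtain ⟨a0, ha0, x, hxS, hax⟩ :=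
    exitEdge hc (S := ({u, v, m} : Set V)) (show u ∈ ({u, v, m} : Set V) by simp) hzS
  have hxS' := hxS
  simp only [Set.mem_insert_iff, Set.mem_singleton_iff, not_or] at hxS'
  obtain ⟨hxu, hxv, hxm'⟩ := hxS'
  have hxm : G.Adj m x := by
    rcases ha0 with rfl | rfl | rfl
    · exact absurd (hNu x hax) hxv
    · rcases hNv x hax with rfl | rfl
      · exact absurd rfl hxu
      · exact absurd rfl hxm'
    · exact hax
  -- uniqueness of x
  have hxuniq : ∀ x', x' ∉ ({u, v, m} : Set V) → G.Adj m x' → x' = x := by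
    intro x' hx'S hx'm
    by_contra hne
    have p1 := hprop x hxS hxm
    have p2 := hprop x' hx'S hx'm
    simp only [Set.mem_insert_iff, Set.mem_singleton_iff, not_or] at hx'S
    obtain ⟨hx'u, hx'v, hx'm'⟩ := hx'S
    have hmem : ({x, v, x'} : Finset V) ∈ connTriples H := by
      rw [conn3 H hxv (fun h => hne h.symm) (Ne.symm hx'v)]
      exact Or.inr (Or.inl ⟨p1.2, p2.2⟩)
    rw [hT3, conn3 G hxv (fun h => hne h.symm) (Ne.symm hx'v)] at hmem
    rcases hmem with ⟨h1, -⟩ | ⟨h1, -⟩ | ⟨-, h2⟩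
    · rcases hNv x h1.symm with h | h
      · exact hxu h
      · exact hxm' h
    · rcases hNv x h1 with h | h
      · exact hxu h
      · exact hxm' h
    · rcases hNv x' h2.symm with h | h
      · exact hx'u h
      · exact hx'm' h
  have hNm : ∀ w, G.Adj m w → w = v ∨ w = x := by
    intro w hw
    by_cases h : w ∈ ({u, v, m} : Set V)
    · simp only [Set.mem_insert_iff, Set.mem_singleton_iff] at h
      rcases h with h1 | h1 | h1
      · exfalso
        rw [h1] at hw
        exact hmv (hNu m hw.symm)
      · exact Or.inl h1
      · exfalso
        rw [h1] at hw
        exact G.irrefl hw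
    · exact Or.inr (hxuniq w h hw)
  -- get y
  obtain ⟨z', hz'⟩ := exists_outside ({u, v, m, x} : Finset V) (by
    have h1 := Finset.card_insert_le u ({v, m, x} : Finset V)
    have h2 := Finset.card_insert_le v ({m, x} : Finset V)
    have h3 := Finset.card_insert_le m ({x} : Finset V)
    have h4 : ({x} : Finset V).card = 1 := Finset.card_singleton x
    omega)
  have hz'S : z' ∉ ({u, v, m, x} : Set V) := by simpa using hz'
  obtain ⟨b0, hb0, y, hyS, hby⟩ :=
    exitEdge hc (S := ({u, v, m, x} : Set V)) (show u ∈ ({u, v, m, x} : Set V) by simp) hz'S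
  simp only [Set.mem_insert_iff, Set.mem_singleton_iff, not_or] at hyS
  obtain ⟨hyu, hyv, hym, hyx⟩ := hyS
  have hxy : G.Adj x y := by
    rcases hb0 with rfl | rfl | rfl | rfl
    · exact absurd (hNu y hby) hyv
    · rcases hNv y hby with rfl | rfl
      · exact absurd rfl hyu
      · exact absurd rfl hym
    · rcases hNm y hby with rfl | rfl
      · exact absurd rfl hyv
      · exact absurd rfl hyx
    · exact hby
  obtain ⟨hnHmx, hHvx⟩ := hprop x hxS hxm
  have hn2 : ({v, x, y} : Finset V) ∉ connTriples G := by
    rw [conn3 G (Ne.symm hxv) (Ne.symm hyv) (Ne.symm hyx)]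
    rintro (⟨h1, -⟩ | ⟨h1, -⟩ | ⟨h1, -⟩)
    · rcases hNv x h1 with rfl | rfl
      · exact hxu rfl
      · exact hxm' rfl
    · rcases hNv x h1.symm with rfl | rfl
      · exact hxu rfl
      · exact hxm' rfl
    · rcases hNv y h1.symm with rfl | rfl
      · exact hyu rfl
      · exact hym rfl
  rw [← hT3, conn3 H (Ne.symm hxv) (Ne.symm hyv) (Ne.symm hyx)] at hn2
  have hnHxy : ¬ H.Adj x y := fun h => hn2 (Or.inr (Or.inl ⟨hHvx.symm, h⟩))
  have h3 : ({m, x, y} : Finset V) ∈ connTriples G := by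
    rw [conn3 G (Ne.symm hxm') (Ne.symm hym) (Ne.symm hyx)]
    exact Or.inr (Or.inl ⟨hxm.symm, hxy⟩)
  rw [← hT3, conn3 H (Ne.symm hxm') (Ne.symm hym) (Ne.symm hyx)] at h3
  rcases h3 with ⟨h1, -⟩ | ⟨h1, -⟩ | ⟨-, h2⟩
  · exact hnHmx h1
  · exact hnHmx h1.symm
  · exact hnHxy h2.symm

/-- Claim A : every edge of the tree `G` is an edge of `H`. -/
lemma claimA (hc : G.Connected) (ha : G.IsAcyclic) (h5 : 5 ≤ Fintype.card V)
    (hT3 : connTriples H = connTriples G) {u v : V} (huv : G.Adj u v) : H.Adj u v := by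
  by_contra hnH
  have huvne := huv.ne
  have hnH' : ¬ H.Adj v u := fun h => hnH h.symm
  have hW : ∀ w, w ≠ u → w ≠ v → (G.Adj u w ∨ G.Adj v w) → H.Adj w u ∧ H.Adj w v := by
    intro w hwu hwv hw
    have hmem : ({u, v, w} : Finset V) ∈ connTriples G := by
      rw [conn3 G huvne (Ne.symm hwu) (Ne.symm hwv)]
      rcases hw with h | h
      · exact Or.inl ⟨huv, h⟩
      · exact Or.inr (Or.inl ⟨huv.symm, h⟩)
    rw [← hT3, conn3 H huvne (Ne.symm hwu) (Ne.symm hwv)] at hmem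
    rcases hmem with ⟨h, -⟩ | ⟨h, -⟩ | h
    · exact absurd h hnH
    · exact absurd h hnH'
    · exact h
  -- find a first element m of W
  obtain ⟨z, hz⟩ := exists_outside ({u, v} : Finset V) (by
    have h1 := Finset.card_insert_le u ({v} : Finset V)
    have h2 : ({v} : Finset V).card = 1 := Finset.card_singleton v
    omega)
  have hzS : z ∉ ({u, v} : Set V) := by simpa using hz
  obtain ⟨a0, ha0, m, hmS, ham⟩ :=
    exitEdge hc (S := ({u, v} : Set V)) (show u ∈ ({u, v} : Set V) by simp) hzS
  simp only [Set.mem_insert_iff, Set.mem_singleton_iff, not_or] at hmS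
  obtain ⟨hmu, hmv⟩ := hmS
  have hm : G.Adj u m ∨ G.Adj v m := by
    rcases ha0 with rfl | rfl
    · exact Or.inl ham
    · exact Or.inr ham
  by_cases htwo : ∃ w, w ≠ u ∧ w ≠ v ∧ (G.Adj u w ∨ G.Adj v w) ∧ w ≠ m
  · -- two distinct common neighbours : contradiction by acyclicity
    obtain ⟨w, hwu, hwv, hw, hwm⟩ := htwo
    obtain ⟨hHmu, hHmv⟩ := hW m hmu hmv hm
    obtain ⟨hHwu, hHwv⟩ := hW w hwu hwv hw
    have hA : ({u, m, w} : Finset V) ∈ connTriples G := by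
      rw [← hT3, conn3 H (Ne.symm hmu) (Ne.symm hwu) (fun h => hwm h.symm)]
      exact Or.inl ⟨hHmu.symm, hHwu.symm⟩
    have hB : ({v, m, w} : Finset V) ∈ connTriples G := by
      rw [← hT3, conn3 H (Ne.symm hmv) (Ne.symm hwv) (fun h => hwm h.symm)]
      exact Or.inl ⟨hHmv.symm, hHwv.symm⟩
    rw [conn3 G (Ne.symm hmu) (Ne.symm hwu) (fun h => hwm h.symm)] at hA
    rw [conn3 G (Ne.symm hmv) (Ne.symm hwv) (fun h => hwm h.symm)] at hB
    rcases hA with ⟨a1, a2⟩ | ⟨a1, a2⟩ | ⟨a1, a2⟩ <;>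
      rcases hB with ⟨b1, b2⟩ | ⟨b1, b2⟩ | ⟨b1, b2⟩
    · exact no4 ha huvne (Ne.symm hwm) a1 b1.symm b2 a2.symm
    · exact noTri ha a1 b2 a2
    · exact noTri ha a1 b2.symm a2
    · exact noTri ha b1 a2 b2
    · exact noTri ha huv b1.symm a1.symm
    · exact no4 ha (Ne.symm hmv) (Ne.symm hwu) huv.symm a1.symm a2 b1
    · exact noTri ha b1 a2.symm b2
    · exact no4 ha (Ne.symm hmu) hwv a1.symm a2 b1 huv.symm
    · exact noTri ha huv b1.symm a1.symm
  · -- m is the unique element of W : leaf configuration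
    push_neg at htwo
    have huniq : ∀ w, w ≠ u → w ≠ v → (G.Adj u w ∨ G.Adj v w) → w = m := by
      intro w h1 h2 h3
      by_contra h4
      exact h4 (by_contra fun h => h (htwo w h1 h2 h3))
    have hnotboth : ¬ (G.Adj u m ∧ G.Adj v m) := by
      rintro ⟨h1, h2⟩
      exact noTri ha huv h2 h1
    rcases hm with hum | hvm
    · -- u's side : v is the leaf
      have hnv : ¬ G.Adj v m := fun h => hnotboth ⟨hum, h⟩
      refine caseLeaf hc ha h5 hT3 huv.symm hnH' hum hnv hmv hmu ?_
      intro w h1 h2 h3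
      exact huniq w h2 h1 h3.symm
    · have hnu : ¬ G.Adj u m := fun h => hnotboth ⟨h, hvm⟩
      exact caseLeaf hc ha h5 hT3 huv hnH hvm hnu hmu hmv huniq

/-- Claim B : every edge of `H` is an edge of the tree `G`. -/
lemma claimB (hc : G.Connected) (ha : G.IsAcyclic) (h5 : 5 ≤ Fintype.card V)
    (hHconn : H.Connected) (hT3 : connTriples H = connTriples G)
    (hleaf : ¬ ∃ l₁ l₂ p : V, l₁ ≠ l₂ ∧ (G.neighborSet l₁).ncard = 1 ∧
        (G.neighborSet l₂).ncard = 1 ∧ G.Adj p l₁ ∧ G.Adj p l₂)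
    {u v : V} (huv : H.Adj u v) : G.Adj u v := by
  by_contra hnG
  have huvne := huv.ne
  have hnG' : ¬ G.Adj v u := fun h => hnG h.symm
  -- find w adjacent in H to u or v
  obtain ⟨z, hz⟩ := exists_outside ({u, v} : Finset V) (by
    have h1 := Finset.card_insert_le u ({v} : Finset V)
    have h2 : ({v} : Finset V).card = 1 := Finset.card_singleton v
    omega)
  have hzS : z ∉ ({u, v} : Set V) := by simpa using hz
  obtain ⟨a0, ha0, m, hmS, ham⟩ :=
    exitEdge hHconn (S := ({u, v} : Set V)) (show u ∈ ({u, v} : Set V) by simp) hzS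
  simp only [Set.mem_insert_iff, Set.mem_singleton_iff, not_or] at hmS
  obtain ⟨hmu, hmv⟩ := hmS
  have hmemH : ({u, v, m} : Finset V) ∈ connTriples H := by
    rw [conn3 H huvne (Ne.symm hmu) (Ne.symm hmv)]
    rcases ha0 with rfl | rfl
    · exact Or.inl ⟨huv, ham⟩
    · exact Or.inr (Or.inl ⟨huv.symm, ham⟩)
  rw [hT3, conn3 G huvne (Ne.symm hmu) (Ne.symm hmv)] at hmemH
  have hm : G.Adj m u ∧ G.Adj m v := by
    rcases hmemH with ⟨h1, -⟩ | ⟨h1, -⟩ | h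
    · exact absurd h1 hnG
    · exact absurd h1 hnG'
    · exact h
  obtain ⟨hmu', hmv'⟩ := hm
  -- u is a leaf with neighbourhood {m}
  have key : ∀ u' v' : V, H.Adj u' v' → ¬ G.Adj u' v' → G.Adj m u' → G.Adj m v' →
      ∀ t, G.Adj u' t → t = m := by
    intro u' v' huv' hnG1 h1 h2 t ht
    by_contra htm
    have htu : t ≠ u' := ht.ne'
    have htv : t ≠ v' := by
      rintro rfl
      exact hnG1 ht
    have hmem2 : ({v', u', t} : Finset V) ∈ connTriples H := by
      rw [conn3 H (fun h => huv'.ne h.symm) (Ne.symm htv) (Ne.symm htu)]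
      exact Or.inr (Or.inl ⟨huv', claimA hc ha h5 hT3 ht⟩)
    rw [hT3, conn3 G (fun h => huv'.ne h.symm) (Ne.symm htv) (Ne.symm htu)] at hmem2
    have htv' : G.Adj t v' := by
      rcases hmem2 with ⟨hh, -⟩ | ⟨hh, -⟩ | ⟨hh, -⟩
      · exact absurd hh.symm hnG1
      · exact absurd hh hnG1
      · exact hh
    exact no4 ha huv'.ne (fun h => htm h.symm) h1.symm h2 htv'.symm ht.symm
  have hNu : ∀ t, G.Adj u t → t = m := key u v huv hnG hmu' hmv'
  have hNv : ∀ t, G.Adj v t → t = m :=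
    key v u huv.symm hnG' hmv' hmu'
  have hNuset : G.neighborSet u = {m} := by
    ext t
    simp only [SimpleGraph.mem_neighborSet, Set.mem_singleton_iff]
    exact ⟨fun h => hNu t h, fun h => h ▸ hmu'.symm⟩
  have hNvset : G.neighborSet v = {m} := by
    ext t
    simp only [SimpleGraph.mem_neighborSet, Set.mem_singleton_iff]
    exact ⟨fun h => hNv t h, fun h => h ▸ hmv'.symm⟩
  exact hleaf ⟨u, v, m, huvne, by rw [hNuset]; exact Set.ncard_singleton m,
    by rw [hNvset]; exact Set.ncard_singleton m, hmu', hmv'⟩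

end Hard

section Easy

open SimpleGraph

variable {V : Type*} [DecidableEq V]

lemma four_le {X : Finset V} (hX : X.card = 3) {w x y z : V}
    (hw : w ∈ X) (hx : x ∈ X) (hy : y ∈ X) (hz : z ∈ X)
    (h1 : w ≠ x) (h2 : w ≠ y) (h3 : w ≠ z) (h4 : x ≠ y) (h5 : x ≠ z) (h6 : y ≠ z) : False := by
  have hsub : ({w, x, y, z} : Finset V) ⊆ X := by
    intro t ht
    simp only [Finset.mem_insert, Finset.mem_singleton] at ht
    rcases ht with rfl | rfl | rfl | rfl <;> assumption
  have hcard : ({w, x, y, z} : Finset V).card = 4 := by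
    rw [Finset.card_insert_of_notMem (by simp [h1, h2, h3]),
      Finset.card_insert_of_notMem (by simp [h4, h5]),
      Finset.card_insert_of_notMem (by simp [h6]), Finset.card_singleton]
  have := Finset.card_le_card hsub
  omega

end Easy

/-- A tree on `n ≥ 5` vertices is strongly `T₃`-reconstructible iff no two
distinct leaves share the same parent. -/
theorem stmt16 {V : Type*} [Fintype V] (G : SimpleGraph V) (hc : G.Connected)
    (ha : G.IsAcyclic) (h5 : 5 ≤ Fintype.card V) :
    StronglyT3Reconstructible G ↔
      ¬ ∃ l₁ l₂ p : V, l₁ ≠ l₂ ∧ (G.neighborSet l₁).ncard = 1 ∧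
        (G.neighborSet l₂).ncard = 1 ∧ G.Adj p l₁ ∧ G.Adj p l₂ := by
  classical
  constructor
  · -- if two leaves share a parent, G is not reconstructible
    intro hrec
    rintro ⟨l₁, l₂, p, hne, hn1, hn2, hp1, hp2⟩
    obtain ⟨a1, ha1⟩ := Set.ncard_eq_one.mp hn1
    obtain ⟨a2, ha2⟩ := Set.ncard_eq_one.mp hn2
    have hpa1 : a1 = p := by
      have hmem : p ∈ G.neighborSet l₁ := hp1.symm
      rw [ha1] at hmem; exact hmem.symm
    have hpa2 : a2 = p := by
      have hmem : p ∈ G.neighborSet l₂ := hp2.symm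
      rw [ha2] at hmem; exact hmem.symm
    rw [hpa1] at ha1
    rw [hpa2] at ha2
    clear hpa1 hpa2
    have hN1 : ∀ x, G.Adj l₁ x → x = p := by
      intro x hx
      have hmem : x ∈ G.neighborSet l₁ := hx
      rw [ha1] at hmem; exact hmem
    have hN2 : ∀ x, G.Adj l₂ x → x = p := by
      intro x hx
      have hmem : x ∈ G.neighborSet l₂ := hx
      rw [ha2] at hmem; exact hmem
    have hl1p : l₁ ≠ p := fun h => G.irrefl (h ▸ hp1)
    have hl2p : l₂ ≠ p := fun h => G.irrefl (h ▸ hp2)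
    have hnG12 : ¬ G.Adj l₁ l₂ := by
      intro h
      have := hN1 l₂ h
      subst this
      exact G.irrefl hp2
    set H : SimpleGraph V := G ⊔ SimpleGraph.fromEdgeSet {s(l₁, l₂)} with hHdef
    have hle : G ≤ H := le_sup_left
    have hHadj : ∀ x y, H.Adj x y ↔ G.Adj x y ∨ (x = l₁ ∧ y = l₂) ∨ (x = l₂ ∧ y = l₁) := by
      intro x y
      rw [hHdef]
      simp only [SimpleGraph.sup_adj, SimpleGraph.fromEdgeSet_adj, Set.mem_singleton_iff,
        Sym2.eq_iff]
      constructor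
      · rintro (h | ⟨(⟨rfl, rfl⟩ | ⟨rfl, rfl⟩), hne'⟩)
        · exact Or.inl h
        · exact Or.inr (Or.inl ⟨rfl, rfl⟩)
        · exact Or.inr (Or.inr ⟨rfl, rfl⟩)
      · rintro (h | ⟨rfl, rfl⟩ | ⟨rfl, rfl⟩)
        · exact Or.inl h
        · exact Or.inr ⟨Or.inl ⟨rfl, rfl⟩, hne⟩
        · exact Or.inr ⟨Or.inr ⟨rfl, rfl⟩, hne.symm⟩
    have hHl12 : H.Adj l₁ l₂ := by rw [hHadj]; exact Or.inr (Or.inl ⟨rfl, rfl⟩)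
    have hHconn : H.Connected := hc.mono hle
    have hT3 : connTriples H = connTriples G := by
      ext X
      constructor
      · rintro hXH
        have hcard := hXH.1
        obtain ⟨a, b, c, hab, hac, hbc, rfl⟩ := Finset.card_eq_three.mp hcard
        rw [conn3 H hab hac hbc] at hXH
        by_cases hl : l₁ ∈ ({a, b, c} : Finset V) ∧ l₂ ∈ ({a, b, c} : Finset V)
        · by_cases hp : p ∈ ({a, b, c} : Finset V)
          · -- then X = {l₁, l₂, p}
            have hcard3 : ({l₁, l₂, p} : Finset V).card = 3 :=
              Finset.card_eq_three.mpr ⟨l₁, l₂, p, hne, hl1p, hl2p, rfl⟩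
            have hXeq : ({l₁, l₂, p} : Finset V) = ({a, b, c} : Finset V) := by
              apply Finset.eq_of_subset_of_card_le
              · intro t ht
                simp only [Finset.mem_insert, Finset.mem_singleton] at ht
                rcases ht with rfl | rfl | rfl
                · exact hl.1
                · exact hl.2
                · exact hp
              · rw [hcard, hcard3]
            rw [← hXeq, conn3 G hne hl1p hl2p]
            exact Or.inr (Or.inr ⟨hp1, hp2⟩)
          · -- p ∉ X : contradiction
            exfalso
            have hnoG : ∀ x y : V, x ∈ ({a, b, c} : Finset V) → y ∈ ({a, b, c} : Finset V) →
                ¬ G.Adj x y := by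
              intro x y hx hy hadj
              by_cases hx1 : x = l₁
              · subst hx1; exact hp ((hN1 y hadj) ▸ hy)
              · by_cases hx2 : x = l₂
                · subst hx2; exact hp ((hN2 y hadj) ▸ hy)
                · by_cases hy1 : y = l₁
                  · subst hy1; exact hp ((hN1 x hadj.symm) ▸ hx)
                  · by_cases hy2 : y = l₂
                    · subst hy2; exact hp ((hN2 x hadj.symm) ▸ hx)
                    · exact four_le hcard hl.1 hl.2 hx hy hne
                        (Ne.symm hx1) (Ne.symm hy1) (Ne.symm hx2) (Ne.symm hy2) hadj.ne
            have kill : ∀ {s t : V}, s ∈ ({a, b, c} : Finset V) → t ∈ ({a, b, c} : Finset V) →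
                H.Adj s t → (s = l₁ ∧ t = l₂) ∨ (s = l₂ ∧ t = l₁) := by
              intro s t hs ht hadj
              rw [hHadj] at hadj
              rcases hadj with h | h | h
              · exact absurd h (hnoG s t hs ht)
              · exact Or.inl h
              · exact Or.inr h
            have final : ∀ x y1 y2 : V, y1 ≠ y2 → x ∈ ({a, b, c} : Finset V) →
                y1 ∈ ({a, b, c} : Finset V) → y2 ∈ ({a, b, c} : Finset V) →
                H.Adj x y1 → H.Adj x y2 → False := by
              intro x y1 y2 hyy hx hy1 hy2 h1 h2
              rcases kill hx hy1 h1 with ⟨e1, e2⟩ | ⟨e1, e2⟩ <;>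
                rcases kill hx hy2 h2 with ⟨f1, f2⟩ | ⟨f1, f2⟩
              · exact hyy (e2.trans f2.symm)
              · exact hne (e1.symm.trans f1)
              · exact hne (f1.symm.trans e1)
              · exact hyy (e2.trans f2.symm)
            rcases hXH with ⟨h1, h2⟩ | ⟨h1, h2⟩ | ⟨h1, h2⟩
            · exact final a b c hbc (by simp) (by simp) (by simp) h1 h2
            · exact final b a c hac (by simp) (by simp) (by simp) h1 h2
            · exact final c a b hab (by simp) (by simp) (by simp) h1 h2
        · -- the new edge is not inside X
          rw [conn3 G hab hac hbc]
          have htrans : ∀ x y : V, x ∈ ({a, b, c} : Finset V) → y ∈ ({a, b, c} : Finset V) →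
              H.Adj x y → G.Adj x y := by
            intro x y hxX hyX hxy
            rw [hHadj] at hxy
            rcases hxy with h | ⟨rfl, rfl⟩ | ⟨rfl, rfl⟩
            · exact h
            · exact absurd ⟨hxX, hyX⟩ hl
            · exact absurd ⟨hyX, hxX⟩ hl
          rcases hXH with ⟨h1, h2⟩ | ⟨h1, h2⟩ | ⟨h1, h2⟩
          · exact Or.inl ⟨htrans _ _ (by simp) (by simp) h1, htrans _ _ (by simp) (by simp) h2⟩
          · exact Or.inr (Or.inl ⟨htrans _ _ (by simp) (by simp) h1,
              htrans _ _ (by simp) (by simp) h2⟩)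
          · exact Or.inr (Or.inr ⟨htrans _ _ (by simp) (by simp) h1,
              htrans _ _ (by simp) (by simp) h2⟩)
      · rintro hXG
        have hcard := hXG.1
        obtain ⟨a, b, c, hab, hac, hbc, rfl⟩ := Finset.card_eq_three.mp hcard
        rw [conn3 G hab hac hbc] at hXG
        rw [conn3 H hab hac hbc]
        rcases hXG with ⟨h1, h2⟩ | ⟨h1, h2⟩ | ⟨h1, h2⟩
        · exact Or.inl ⟨hle h1, hle h2⟩
        · exact Or.inr (Or.inl ⟨hle h1, hle h2⟩)
        · exact Or.inr (Or.inr ⟨hle h1, hle h2⟩)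
    have hHG := hrec H hHconn hT3
    rw [hHG] at hHl12
    exact hnG12 hHl12
  · -- main direction
    intro hleaf H hHconn hT3
    ext u v
    exact ⟨fun h => claimB hc ha h5 hHconn hT3 hleaf h, fun h => claimA hc ha h5 hT3 h⟩
end

section
/- Let G be a finite simple graph and v ∈ V(G). If the set 𝒩(v) of T₃-neighborhoods of v (maximal subsets M ⊆ V(G)\{v} such that every pair of distinct vertices in M forms a connected triple with v) has exactly one element N_v, then either N_v = N(v), or N_v = N(v) ∪ {w} for a unique vertex w ∉ N(v) ∪ {v} that is adjacent to every vertex of N(v). -/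
/-- Every pair of distinct vertices of `M` forms a connected triple with `v`
(at least two of the three pairs are edges). -/
def PairwiseT3 {V : Type*} (G : SimpleGraph V) (v : V) (M : Set V) : Prop :=
  ∀ a ∈ M, ∀ b ∈ M, a ≠ b →
    ((G.Adj v a ∧ G.Adj v b) ∨ (G.Adj v a ∧ G.Adj a b) ∨ (G.Adj v b ∧ G.Adj a b))

/-- A `T₃`-neighborhood of `v`: a maximal subset of `V \ {v}` every pair of
whose distinct vertices forms a connected triple with `v`. -/
def IsT3Neighborhood {V : Type*} (G : SimpleGraph V) (v : V) (M : Set V) : Prop :=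
  v ∉ M ∧ PairwiseT3 G v M ∧
    ∀ M' : Set V, v ∉ M' → PairwiseT3 G v M' → M ⊆ M' → M' = M

/-!
`N(v)` is pairwise `T₃`, so by Zorn's lemma it lies in some `T₃`-neighborhood, hence in `N_v`
when that is the only one. Two distinct non-neighbours of `v` never form a connected triple
with `v`, so `N_v` contains at most one vertex `w` outside `N(v)`, and the triple `{v, w, x}`
for `x ∈ N(v)` can only be connected through the edge `wx`.
-/

namespace PairwiseT3

variable {V : Type*} {G : SimpleGraph V} {v a b : V} {M : Set V}

theorem neighborSet (G : SimpleGraph V) (v : V) : PairwiseT3 G v (G.neighborSet v) :=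
  fun _ ha _ hb _ => Or.inl ⟨ha, hb⟩

theorem sUnion {c : Set (Set V)} (hc : IsChain (· ⊆ ·) c) (h : ∀ M ∈ c, PairwiseT3 G v M) :
    PairwiseT3 G v (⋃₀ c) := by
  rintro a ⟨s, hs, has⟩ b ⟨t, ht, hbt⟩ hab
  rcases hc.total hs ht with hst | hts
  · exact h t ht a (hst has) b hbt hab
  · exact h s hs a has b (hts hbt) hab

theorem adj_of_not_adj (h : PairwiseT3 G v M) (ha : a ∈ M) (hva : ¬G.Adj v a) (hb : b ∈ M)
    (hab : a ≠ b) : G.Adj a b := by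
  rcases h a ha b hb hab with ⟨hva', -⟩ | ⟨hva', -⟩ | ⟨-, hab'⟩
  · exact absurd hva' hva
  · exact absurd hva' hva
  · exact hab'

theorem eq_of_not_adj (h : PairwiseT3 G v M) (ha : a ∈ M) (hva : ¬G.Adj v a) (hb : b ∈ M)
    (hvb : ¬G.Adj v b) : a = b := by
  by_contra hab
  rcases h a ha b hb hab with ⟨hva', -⟩ | ⟨hva', -⟩ | ⟨hvb', -⟩
  · exact hva hva'
  · exact hva hva'
  · exact hvb hvb'

theorem subset_insert_neighborSet (h : PairwiseT3 G v M) (ha : a ∈ M) (hva : ¬G.Adj v a) :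
    M ⊆ insert a (G.neighborSet v) := by
  intro b hb
  by_cases hvb : G.Adj v b
  · exact Or.inr hvb
  · exact Or.inl (h.eq_of_not_adj hb hvb ha hva)

end PairwiseT3

theorem exists_isT3Neighborhood_superset {V : Type*} {G : SimpleGraph V} {v : V} {S : Set V}
    (hvS : v ∉ S) (hS : PairwiseT3 G v S) : ∃ M, IsT3Neighborhood G v M ∧ S ⊆ M := by
  obtain ⟨M, hSM, hM⟩ := zorn_subset_nonempty {M | v ∉ M ∧ PairwiseT3 G v M}
    (fun c hcS hc _ => ⟨⋃₀ c, ⟨by simpa using fun M hM => (hcS hM).1,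
      PairwiseT3.sUnion hc fun M hM => (hcS hM).2⟩, fun _ => Set.subset_sUnion_of_mem⟩)
    S ⟨hvS, hS⟩
  exact ⟨M, ⟨hM.prop.1, hM.prop.2, fun M' hvM' hM' hMM' =>
    (hM.eq_of_subset ⟨hvM', hM'⟩ hMM').symm⟩, hSM⟩

theorem stmt18_general {V : Type*} (G : SimpleGraph V) (v : V)
    (Nv : Set V) (hNv : IsT3Neighborhood G v Nv)
    (huniq : ∀ M : Set V, IsT3Neighborhood G v M → M = Nv) :
    Nv = G.neighborSet v ∨
      ∃! w : V, w ∉ G.neighborSet v ∧ w ≠ v ∧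
        Nv = G.neighborSet v ∪ {w} ∧ ∀ x ∈ G.neighborSet v, G.Adj w x := by
  obtain ⟨hvNv, hpair, -⟩ := hNv
  have hN : G.neighborSet v ⊆ Nv := by
    obtain ⟨M, hM, hNM⟩ := exists_isT3Neighborhood_superset
      (G.notMem_neighborSet_self (a := v)) (PairwiseT3.neighborSet G v)
    exact huniq M hM ▸ hNM
  by_cases hNvN : Nv ⊆ G.neighborSet v
  · exact Or.inl (hNvN.antisymm hN)
  obtain ⟨w, hwNv, hvw⟩ := Set.not_subset.mp hNvN
  have hNv_eq : Nv = G.neighborSet v ∪ {w} := by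
    rw [Set.union_singleton]
    exact (hpair.subset_insert_neighborSet hwNv hvw).antisymm
      (Set.insert_subset hwNv hN)
  refine Or.inr ⟨w, ⟨hvw, ne_of_mem_of_not_mem hwNv hvNv, hNv_eq,
    fun x hx => hpair.adj_of_not_adj hwNv hvw (hN hx) (ne_of_mem_of_not_mem hx hvw).symm⟩, ?_⟩
  rintro w' ⟨-, -, hNv_eq', -⟩
  rw [hNv_eq'] at hwNv
  exact (hwNv.resolve_left hvw).symm

/-- If `v` has exactly one `T₃`-neighborhood `N_v`, then either `N_v = N(v)` or
`N_v = N(v) ∪ {w}` for a unique vertex `w ∉ N[v]` adjacent to all of `N(v)`. -/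
theorem stmt18 {V : Type*} [Fintype V] (G : SimpleGraph V) (hc : G.Connected)
    (h3 : 3 ≤ Fintype.card V) (v : V) (hdeg : 2 ≤ (G.neighborSet v).ncard)
    (Nv : Set V) (hNv : IsT3Neighborhood G v Nv)
    (huniq : ∀ M : Set V, IsT3Neighborhood G v M → M = Nv) :
    Nv = G.neighborSet v ∨
      ∃! w : V, w ∉ G.neighborSet v ∧ w ≠ v ∧
        Nv = G.neighborSet v ∪ {w} ∧ ∀ x ∈ G.neighborSet v, G.Adj w x :=
  stmt18_general G v Nv hNv huniq
end
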